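/- arXiv:2202.04756 — 4 statements merged into one kernel-verified Lean document; each statement's English description precedes it below -/
import Mathlib

section
/- Let X be a finite connected simple graph. If γ(X) is isomorphic to a cycle graph Cₙ for some n ≥ 3, then X is isomorphic to the star K₁,₃ (and then γ(X) ≅ C₆). -/
open SimpleGraph Finset

def symEdgeGraph {V : Type*} (X : SimpleGraph V) : SimpleGraph X.Dart where
  Adj d d' := (d.snd = d'.fst ∧ d.fst ≠ d'.snd) ∨ (d'.snd = d.fst ∧ d'.fst ≠ d.snd)
  symm := ⟨fun d d' h => Or.symm h⟩
  loopless := ⟨by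
    rintro d (⟨h1, -⟩ | ⟨h1, -⟩) <;> exact X.loopless.irrefl d.fst (h1 ▸ d.adj)⟩

lemma symEdgeGraph_adj {V : Type*} {X : SimpleGraph V} {d d' : X.Dart} :
    (symEdgeGraph X).Adj d d' ↔
      (d.snd = d'.fst ∧ d.fst ≠ d'.snd) ∨ (d'.snd = d.fst ∧ d'.fst ≠ d.snd) := Iff.rfl

instance {V : Type*} [DecidableEq V] (X : SimpleGraph V) :
    DecidableRel (symEdgeGraph X).Adj := fun d d' =>
  decidable_of_iff ((d.snd = d'.fst ∧ d.fst ≠ d'.snd) ∨ (d'.snd = d.fst ∧ d'.fst ≠ d.snd))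
    symEdgeGraph_adj.symm

instance dartDecEq {V : Type*} [DecidableEq V] (X : SimpleGraph V) : DecidableEq X.Dart :=
  fun d d' => decidable_of_iff _ (SimpleGraph.Dart.ext_iff d d').symm

lemma symEdgeGraph_degree {V : Type*} [Fintype V] [DecidableEq V] (X : SimpleGraph V)
    [DecidableRel X.Adj] (d : X.Dart) :
    (symEdgeGraph X).degree d + 2 = X.degree d.fst + X.degree d.snd := by
  classical
  have hA : (Finset.univ.filter fun d' : X.Dart => d.snd = d'.fst ∧ d.fst ≠ d'.snd).card
      = ((X.neighborFinset d.snd).erase d.fst).card := by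
    apply Finset.card_bij (fun d' _ => d'.snd)
    · rintro d' hd'
      simp only [Finset.mem_filter] at hd'
      obtain ⟨-, h1, h2⟩ := hd'
      rw [Finset.mem_erase, mem_neighborFinset]
      exact ⟨fun h => h2 h.symm, h1 ▸ d'.adj⟩
    · rintro d1 h1 d2 h2 heq
      simp only [Finset.mem_filter] at h1 h2
      exact SimpleGraph.Dart.ext _ _ (Prod.ext (h1.2.1.symm.trans h2.2.1) heq)
    · rintro w hw
      rw [Finset.mem_erase, mem_neighborFinset] at hw
      exact ⟨⟨(d.snd, w), hw.2⟩, by simp [Ne.symm hw.1], rfl⟩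
  have hB : (Finset.univ.filter fun d' : X.Dart => d'.snd = d.fst ∧ d'.fst ≠ d.snd).card
      = ((X.neighborFinset d.fst).erase d.snd).card := by
    apply Finset.card_bij (fun d' _ => d'.fst)
    · rintro d' hd'
      simp only [Finset.mem_filter] at hd'
      obtain ⟨-, h1, h2⟩ := hd'
      rw [Finset.mem_erase, mem_neighborFinset]
      exact ⟨h2, h1 ▸ d'.adj.symm⟩
    · rintro d1 h1 d2 h2 heq
      simp only [Finset.mem_filter] at h1 h2
      exact SimpleGraph.Dart.ext _ _ (Prod.ext heq (h1.2.1.trans h2.2.1.symm))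
    · rintro w hw
      rw [Finset.mem_erase, mem_neighborFinset] at hw
      exact ⟨⟨(w, d.fst), hw.2.symm⟩, by simp [hw.1], rfl⟩
  have hdeg : (symEdgeGraph X).degree d =
      ((X.neighborFinset d.snd).erase d.fst).card +
        ((X.neighborFinset d.fst).erase d.snd).card := by
    rw [degree, neighborFinset_eq_filter, ← hA, ← hB, ← Finset.card_union_of_disjoint, ←
      Finset.filter_or]
    · congr 1
      exact Finset.filter_congr fun x _ => by rw [symEdgeGraph_adj]
    · rw [Finset.disjoint_filter]
      rintro d' - ⟨h1, h2⟩ ⟨h3, -⟩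
      exact h2 h3.symm
  have m1 : d.fst ∈ X.neighborFinset d.snd := by rw [mem_neighborFinset]; exact d.adj.symm
  have m2 : d.snd ∈ X.neighborFinset d.fst := by rw [mem_neighborFinset]; exact d.adj
  have c1 := Finset.card_erase_of_mem m1
  have c2 := Finset.card_erase_of_mem m2
  have p1 : 0 < (X.neighborFinset d.snd).card := Finset.card_pos.2 ⟨_, m1⟩
  have p2 : 0 < (X.neighborFinset d.fst).card := Finset.card_pos.2 ⟨_, m2⟩
  rw [hdeg, degree, degree]
  omega

section TwoRegular

variable {V : Type*} {X : SimpleGraph V}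

lemma dart_not_adj_symm (e : X.Dart) : ¬ (symEdgeGraph X).Adj e e.symm := by
  rintro (⟨-, h⟩ | ⟨-, h⟩)
  · exact h rfl
  · exact h rfl

variable [Fintype V] [DecidableEq V] [DecidableRel X.Adj]

lemma exists_succ (hdeg : ∀ v, X.degree v = 2) (d : X.Dart) :
    ∃ d' : X.Dart, (d'.fst = d.snd ∧ d'.snd ≠ d.fst) ∧
      ∀ e : X.Dart, e.fst = d.snd → e.snd ≠ d.fst → e = d' := by
  have hmem : d.fst ∈ X.neighborFinset d.snd := by
    rw [mem_neighborFinset]; exact d.adj.symm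
  have hcard : ((X.neighborFinset d.snd).erase d.fst).card = 1 := by
    rw [Finset.card_erase_of_mem hmem]
    have : X.degree d.snd = 2 := hdeg d.snd
    rw [degree] at this
    omega
  obtain ⟨w, hw⟩ := Finset.card_eq_one.1 hcard
  have hwmem : w ∈ (X.neighborFinset d.snd).erase d.fst := by rw [hw]; exact Finset.mem_singleton_self w
  rw [Finset.mem_erase, mem_neighborFinset] at hwmem
  refine ⟨⟨(d.snd, w), hwmem.2⟩, ⟨rfl, hwmem.1⟩, ?_⟩
  rintro e he1 he2
  have : e.snd ∈ (X.neighborFinset d.snd).erase d.fst := by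
    rw [Finset.mem_erase, mem_neighborFinset]
    exact ⟨he2, he1 ▸ e.adj⟩
  rw [hw, Finset.mem_singleton] at this
  exact SimpleGraph.Dart.ext _ _ (Prod.ext he1 this)

variable (hdeg : ∀ v, X.degree v = 2)

/-- successor dart -/
noncomputable def succD (d : X.Dart) : X.Dart := Classical.choose (exists_succ hdeg d)

lemma succD_fst (d : X.Dart) : (succD hdeg d).fst = d.snd :=
  (Classical.choose_spec (exists_succ hdeg d)).1.1

lemma succD_snd (d : X.Dart) : (succD hdeg d).snd ≠ d.fst :=
  (Classical.choose_spec (exists_succ hdeg d)).1.2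

lemma succD_uniq {d e : X.Dart} (h1 : e.fst = d.snd) (h2 : e.snd ≠ d.fst) :
    e = succD hdeg d :=
  (Classical.choose_spec (exists_succ hdeg d)).2 e h1 h2

/-- predecessor dart -/
noncomputable def predD (d : X.Dart) : X.Dart := (succD hdeg d.symm).symm

lemma succD_predD (d : X.Dart) : succD hdeg (predD hdeg d) = d := by
  symm
  apply succD_uniq
  · show d.fst = (succD hdeg d.symm).symm.snd
    have := succD_fst hdeg d.symm
    simpa [Dart.symm] using this.symm
  · show d.snd ≠ (succD hdeg d.symm).symm.fst
    have := succD_snd hdeg d.symm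
    simpa [Dart.symm, eq_comm] using Ne.symm this
  
lemma predD_succD (d : X.Dart) : predD hdeg (succD hdeg d) = d := by
  have : succD hdeg (succD hdeg d).symm = d.symm := by
    symm
    apply succD_uniq
    · show d.symm.fst = (succD hdeg d).symm.snd
      simpa [Dart.symm] using (succD_fst hdeg d).symm
    · show d.symm.snd ≠ (succD hdeg d).symm.fst
      simpa [Dart.symm] using Ne.symm (succD_snd hdeg d)
  rw [predD, this, Dart.symm_symm]

/-- the successor permutation -/
noncomputable def succE : Equiv.Perm X.Dart :=
  ⟨succD hdeg, predD hdeg, predD_succD hdeg, succD_predD hdeg⟩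

lemma symEdge_adj_iff (d d' : X.Dart) :
    (symEdgeGraph X).Adj d d' ↔ d' = succD hdeg d ∨ d = succD hdeg d' := by
  constructor
  · rintro (⟨h1, h2⟩ | ⟨h1, h2⟩)
    · exact Or.inl (succD_uniq hdeg h1.symm (Ne.symm h2))
    · exact Or.inr (succD_uniq hdeg h1.symm (Ne.symm h2))
  · rintro (rfl | rfl)
    · exact Or.inl ⟨(succD_fst hdeg d).symm, Ne.symm (succD_snd hdeg d)⟩
    · exact Or.inr ⟨(succD_fst hdeg d').symm, Ne.symm (succD_snd hdeg d')⟩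

lemma succD_symm (d : X.Dart) : (succD hdeg d).symm = predD hdeg d.symm := by
  rw [predD, Dart.symm_symm]

end TwoRegular

section Contradiction

variable {V : Type*} {X : SimpleGraph V} [Fintype V] [DecidableEq V] [DecidableRel X.Adj]

lemma two_regular_no_reach (hdeg : ∀ v, X.degree v = 2) (d₀ : X.Dart)
    (hreach : (symEdgeGraph X).Reachable d₀ d₀.symm) : False := by
  set E : Equiv.Perm X.Dart := succE hdeg with hE
  set f : X.Dart → X.Dart := succD hdeg with hf
  set g : X.Dart → X.Dart := predD hdeg with hg
  set N : ℕ := orderOf E with hN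
  have hNpos : 0 < N := orderOf_pos E
  have hfN : ∀ x : X.Dart, f^[N] x = x := by
    intro x
    have : (⇑E)^[N] = ⇑(E ^ N) := Equiv.Perm.iterate_eq_pow E N
    have h2 : E ^ N = 1 := pow_orderOf_eq_one E
    calc f^[N] x = (⇑E)^[N] x := rfl
      _ = (E ^ N) x := by rw [this]
      _ = x := by rw [h2]; rfl
  have hfg : ∀ x, f (g x) = x := succD_predD hdeg
  have hginj : ∀ x, g x = f^[N-1] x := by
    intro x
    have h1 : f (f^[N-1] x) = x := by
      rw [← Function.iterate_succ_apply' f (N-1) x]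
      simp only [Nat.succ_eq_add_one]
      have e : N - 1 + 1 = N := by omega
      rw [e]; exact hfN x
    have h2 : f (g x) = x := hfg x
    exact (succE hdeg).injective (h2.trans h1.symm)
  -- reachability gives an iterate
  have hstep : ∀ (a b : X.Dart), (symEdgeGraph X).Reachable a b → ∃ k, f^[k] a = b := by
    intro a b hab
    obtain ⟨w⟩ := hab
    induction w with
    | nil => exact ⟨0, rfl⟩
    | @cons u x b h p IH =>
      obtain ⟨k, hk⟩ := IH
      rcases (symEdge_adj_iff hdeg u x).1 h with rfl | rfl
      · exact ⟨k + 1, by rw [Function.iterate_succ_apply]; exact hk⟩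
      · refine ⟨k + (N - 1), ?_⟩
        rw [Function.iterate_add_apply, ← hginj, hg, predD_succD hdeg]
        exact hk
  obtain ⟨k, hk⟩ := hstep d₀ d₀.symm hreach
  set r : ℕ := Function.minimalPeriod f d₀ with hr
  have hper : Function.IsPeriodicPt f N d₀ := hfN d₀
  have hrpos : 0 < r := hper.minimalPeriod_pos hNpos
  have hrdvdN : r ∣ N := hper.minimalPeriod_dvd
  have hcong : ∀ a b, a ≡ b [MOD r] → f^[a] d₀ = f^[b] d₀ := by
    have key : ∀ a b, a ≤ b → a ≡ b [MOD r] → f^[a] d₀ = f^[b] d₀ := by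
      intro a b hle hab
      obtain ⟨t, ht⟩ := (Nat.modEq_iff_dvd' hle).mp hab
      have hb : b = a + r * t := by omega
      have hp : f^[r * t] d₀ = d₀ :=
        Function.IsPeriodicPt.mul_const (Function.isPeriodicPt_minimalPeriod f d₀) t
      rw [hb, Function.iterate_add_apply, hp]
    intro a b hab
    rcases le_total a b with hle | hle
    · exact key a b hle hab
    · exact (key b a hle hab.symm).symm
  -- symm interacts with iterates
  have hfsymm : ∀ y : X.Dart, (f y).symm = g y.symm := by
    intro y
    rw [hf, hg, succD_symm]
  have hsymm_it : ∀ (j : ℕ) (x : X.Dart), (f^[j] x).symm = g^[j] x.symm := by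
    intro j
    induction j with
    | zero => intro x; rfl
    | succ j IH =>
      intro x
      rw [Function.iterate_succ_apply' f, Function.iterate_succ_apply' g, hfsymm, IH]
  have hgiter : ∀ (j : ℕ) (y : X.Dart), g^[j] y = f^[j * (N - 1)] y := by
    intro j
    induction j with
    | zero => intro y; simp
    | succ j IH =>
      intro y
      rw [Function.iterate_succ_apply g, hginj, IH, ← Function.iterate_add_apply]
      congr 1
      ring
  have hmain : ∀ j : ℕ, (f^[j] d₀).symm = f^[j * (N - 1) + k] d₀ := by
    intro j
    rw [hsymm_it j d₀, ← hk, hgiter j, ← Function.iterate_add_apply]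
  have hNdvd : ∀ j : ℕ, j * N ≡ 0 [MOD r] := by
    intro j
    exact (Nat.modEq_zero_iff_dvd).2 (Dvd.dvd.mul_left hrdvdN j)
  obtain ⟨N', hN'⟩ : ∃ N', N = N' + 1 := ⟨N - 1, by omega⟩
  rcases Nat.even_or_odd k with ⟨j, hj⟩ | ⟨j, hj⟩
  · -- k = j + j : fixed point of symm, contradiction
    have harith : j * (N - 1) + k = j * N + j := by
      rw [hN']
      simp only [Nat.add_sub_cancel, Nat.mul_succ]
      omega
    have hcg : f^[j * (N - 1) + k] d₀ = f^[j] d₀ := by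
      apply hcong
      rw [harith]
      calc j * N + j ≡ 0 + j [MOD r] := (hNdvd j).add_right j
        _ = j := by omega
    have := hmain j
    rw [hcg] at this
    exact Dart.symm_ne _ this
  · -- k = 2j+1 : symm is adjacent, contradiction
    have harith : j * (N - 1) + k = j * N + (j + 1) := by
      rw [hN']
      simp only [Nat.add_sub_cancel, Nat.mul_succ]
      omega
    have hcg : f^[j * (N - 1) + k] d₀ = f^[j + 1] d₀ := by
      apply hcong
      rw [harith]
      calc j * N + (j + 1) ≡ 0 + (j + 1) [MOD r] := (hNdvd j).add_right _
        _ = j + 1 := by omega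
    have hadj : (symEdgeGraph X).Adj (f^[j] d₀) (f^[j] d₀).symm := by
      rw [hmain j, hcg, Function.iterate_succ_apply' f]
      exact ((symEdge_adj_iff hdeg _ _).2 (Or.inl rfl))
    exact dart_not_adj_symm _ hadj

end Contradiction

section StarCase

lemma iso_degree {W W' : Type*} {G : SimpleGraph W} {G' : SimpleGraph W'} (φ : G ≃g G')
    (v : W) [Fintype (G.neighborSet v)] [Fintype (G'.neighborSet (φ v))] :
    G.degree v = G'.degree (φ v) := by
  rw [← card_neighborSet_eq_degree, ← card_neighborSet_eq_degree]
  exact Fintype.card_congr (φ.mapNeighborSet v)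

variable {V : Type*} [Fintype V] [DecidableEq V] (X : SimpleGraph V) [DecidableRel X.Adj]

lemma star_iso (c : V) (hc3 : X.degree c = 3)
    (hstar : ∀ v, v = c ∨ X.Adj c v) (hnb1 : ∀ u, X.Adj c u → X.degree u = 1) :
    Nonempty (X ≃g completeBipartiteGraph (Fin 1) (Fin 3)) := by
  have hvc : ∀ v, ¬X.Adj c v → v = c := fun v hv => (hstar v).resolve_right hv
  have hnn : ∀ u v, X.Adj c u → X.Adj c v → ¬X.Adj u v := by
    intro u v hu hv huv
    have h1 : X.degree u = 1 := hnb1 u hu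
    have m1 : c ∈ X.neighborFinset u := by rw [mem_neighborFinset]; exact hu.symm
    have m2 : v ∈ X.neighborFinset u := by rw [mem_neighborFinset]; exact huv
    have : c = v := Finset.card_le_one.mp (le_of_eq h1) c m1 v m2
    exact X.irrefl (this ▸ hv)
  have hcard : Fintype.card {v // X.Adj c v} = 3 := by
    rw [← hc3, ← card_neighborSet_eq_degree]
    exact Fintype.card_congr (Equiv.subtypeEquivRight fun v => Iff.rfl)
  obtain ⟨e3⟩ : Nonempty ({v // X.Adj c v} ≃ Fin 3) :=
    ⟨Fintype.equivFinOfCardEq hcard⟩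
  refine ⟨⟨⟨fun v => if h : X.Adj c v then Sum.inr (e3 ⟨v, h⟩) else Sum.inl 0,
    Sum.elim (fun _ => c) (fun i => (e3.symm i).1), ?_, ?_⟩, ?_⟩⟩
  · intro v
    by_cases h : X.Adj c v
    · simp only [dif_pos h, Sum.elim_inr, Equiv.symm_apply_apply]
    · simp only [dif_neg h, Sum.elim_inl]
      exact (hvc v h).symm
  · rintro (i | i)
    · simp [Fin.fin_one_eq_zero i]
    · have h : X.Adj c (e3.symm i).1 := (e3.symm i).2
      simp [h]
  · intro a b
    by_cases ha : X.Adj c a <;> by_cases hb : X.Adj c b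
    · simp only [Equiv.coe_fn_mk, dif_pos ha, dif_pos hb, completeBipartiteGraph_adj]
      simp only [Sum.isLeft_inr, Sum.isRight_inr, Sum.isLeft_inl, Sum.isRight_inl]
      constructor
      · rintro (⟨h1, -⟩ | ⟨-, h2⟩) <;> simp_all
      · intro hab
        exact absurd hab (hnn a b ha hb)
    · have hbc : b = c := hvc b hb
      subst hbc
      simp only [Equiv.coe_fn_mk, dif_pos ha, dif_neg hb, completeBipartiteGraph_adj]
      simp only [Sum.isLeft_inr, Sum.isRight_inr, Sum.isLeft_inl, Sum.isRight_inl]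
      simpa using ha.symm
    · have hac : a = c := hvc a ha
      subst hac
      simp only [Equiv.coe_fn_mk, dif_neg ha, dif_pos hb, completeBipartiteGraph_adj]
      simp only [Sum.isLeft_inr, Sum.isRight_inr, Sum.isLeft_inl, Sum.isRight_inl]
      simpa using hb
    · have hac : a = c := hvc a ha
      have hbc : b = c := hvc b hb
      subst hac; subst hbc
      simp only [Equiv.coe_fn_mk, dif_neg ha, completeBipartiteGraph_adj]
      simp only [Sum.isLeft_inl, Sum.isRight_inl]
      simpa using X.irrefl

end StarCase

section Functor

/-- An isomorphism of graphs induces an isomorphism of symmetric edge graphs. -/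
def symEdgeGraphIso {V W : Type*} {G : SimpleGraph V} {G' : SimpleGraph W} (φ : G ≃g G') :
    symEdgeGraph G ≃g symEdgeGraph G' where
  toFun d := ⟨(φ d.fst, φ d.snd), φ.map_adj_iff.2 d.adj⟩
  invFun d := ⟨(φ.symm d.fst, φ.symm d.snd), φ.symm.map_adj_iff.2 d.adj⟩
  left_inv d := SimpleGraph.Dart.ext _ _ (Prod.ext (φ.symm_apply_apply _) (φ.symm_apply_apply _))
  right_inv d := SimpleGraph.Dart.ext _ _ (Prod.ext (φ.apply_symm_apply _) (φ.apply_symm_apply _))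
  map_rel_iff' := by
    intro d d'
    show ((φ d.snd = φ d'.fst ∧ φ d.fst ≠ φ d'.snd) ∨
      (φ d'.snd = φ d.fst ∧ φ d'.fst ≠ φ d.snd)) ↔ _
    rw [symEdgeGraph_adj]
    simp [Equiv.apply_eq_iff_eq, (EmbeddingLike.apply_eq_iff_eq φ.toEquiv).ne]

end Functor

section StarGamma

instance : DecidableRel (completeBipartiteGraph (Fin 1) (Fin 3)).Adj := fun v w =>
  inferInstanceAs (Decidable ((v.isLeft ∧ w.isRight) ∨ (v.isRight ∧ w.isLeft)))

/-- the six darts of the star -/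
def starDart (p : Sum (Fin 1) (Fin 3) × Sum (Fin 1) (Fin 3))
    (h : (completeBipartiteGraph (Fin 1) (Fin 3)).Adj p.1 p.2) :
    (completeBipartiteGraph (Fin 1) (Fin 3)).Dart := ⟨p, h⟩

def c6fun : Fin 6 → (completeBipartiteGraph (Fin 1) (Fin 3)).Dart
  | 0 => starDart (Sum.inr 0, Sum.inl 0) (by simp)
  | 1 => starDart (Sum.inl 0, Sum.inr 1) (by simp)
  | 2 => starDart (Sum.inr 2, Sum.inl 0) (by simp)
  | 3 => starDart (Sum.inl 0, Sum.inr 0) (by simp)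
  | 4 => starDart (Sum.inr 1, Sum.inl 0) (by simp)
  | 5 => starDart (Sum.inl 0, Sum.inr 2) (by simp)

noncomputable def starGammaIso : cycleGraph 6 ≃g symEdgeGraph (completeBipartiteGraph (Fin 1) (Fin 3)) where
  toEquiv := Equiv.ofBijective c6fun (by decide)
  map_rel_iff' := by
    intro a b
    show (symEdgeGraph _).Adj (c6fun a) (c6fun b) ↔ (cycleGraph 6).Adj a b
    revert a b
    decide

end StarGamma

/-- If `X` is a finite connected simple graph such that `γ(X)` is isomorphic to a cycle graph
`Cₙ` for some `n ≥ 3`, then `X ≅ K₁,₃` (and then `γ(X) ≅ C₆`). -/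
theorem symEdgeGraph_cycle_implies_star {V : Type*} [Fintype V]
    (X : SimpleGraph V) (hconn : X.Connected)
    (h : ∃ n : ℕ, 3 ≤ n ∧ Nonempty (symEdgeGraph X ≃g cycleGraph n)) :
    Nonempty (X ≃g completeBipartiteGraph (Fin 1) (Fin 3)) ∧
      Nonempty (symEdgeGraph X ≃g cycleGraph 6) := by
  classical
  obtain ⟨n, hn, ⟨φ⟩⟩ := h
  obtain ⟨m, rfl⟩ : ∃ m, n = m + 3 := ⟨n - 3, by omega⟩
  have hγdeg : ∀ d : X.Dart, (symEdgeGraph X).degree d = 2 := by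
    intro d
    rw [iso_degree φ d]
    exact cycleGraph_degree_three_le
  have hsum : ∀ {u v : V}, X.Adj u v → X.degree u + X.degree v = 4 := by
    intro u v huv
    have h2 := symEdgeGraph_degree X (⟨(u, v), huv⟩ : X.Dart)
    rw [hγdeg] at h2
    simpa using h2.symm
  set d₀ : X.Dart := φ.symm ⟨0, by omega⟩ with hd₀
  by_cases h2 : ∃ v, X.degree v = 2
  · exfalso
    obtain ⟨v, hv⟩ := h2
    have hprop : ∀ {a b : V} (w : X.Walk a b), X.degree a = 2 → X.degree b = 2 := by
      intro a b w
      induction w with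
      | nil => exact id
      | cons hadj p IH =>
        intro ha
        apply IH
        have := hsum hadj
        omega
    have hdeg2 : ∀ u, X.degree u = 2 := fun u => hprop (hconn.preconnected v u).some hv
    apply two_regular_no_reach hdeg2 d₀
    have hr : (cycleGraph (m + 3)).Reachable (φ d₀) (φ d₀.symm) :=
      (cycleGraph_connected (n := m + 2)).preconnected _ _
    have := hr.map φ.symm.toHom
    simpa using this
  · obtain ⟨c, hc3⟩ : ∃ c, X.degree c = 3 := by
      have h4 := hsum d₀.adj
      have p1 : 0 < X.degree d₀.fst := (X.degree_pos_iff_exists_adj _).2 ⟨_, d₀.adj⟩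
      have p2 : 0 < X.degree d₀.snd := (X.degree_pos_iff_exists_adj _).2 ⟨_, d₀.adj.symm⟩
      have q1 : X.degree d₀.fst ≠ 2 := fun hh => h2 ⟨_, hh⟩
      have q2 : X.degree d₀.snd ≠ 2 := fun hh => h2 ⟨_, hh⟩
      rcases (by omega : X.degree d₀.fst = 3 ∨ X.degree d₀.snd = 3) with hh | hh
      exacts [⟨_, hh⟩, ⟨_, hh⟩]
    have hnb1 : ∀ u, X.Adj c u → X.degree u = 1 := by
      intro u hu
      have := hsum hu
      omega
    have hstar : ∀ v, v = c ∨ X.Adj c v := by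
      have key : ∀ (a b : V) (w : X.Walk a b), b = c → (a = c ∨ X.Adj c a) := by
        intro a b w
        induction w with
        | nil => intro hb; exact Or.inl hb
        | @cons a x b hadj p IH =>
          intro hb
          rcases IH hb with rfl | hcx
          · exact Or.inr hadj.symm
          · left
            have m1 : a ∈ X.neighborFinset x := by rw [mem_neighborFinset]; exact hadj.symm
            have m2 : c ∈ X.neighborFinset x := by rw [mem_neighborFinset]; exact hcx.symm
            exact Finset.card_le_one.mp (le_of_eq (hnb1 x hcx)) a m1 c m2
      intro v
      exact key v c (hconn.preconnected v c).some rfl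
    obtain ⟨ψ⟩ := star_iso X c hc3 hstar hnb1
    exact ⟨⟨ψ⟩, ⟨(symEdgeGraphIso ψ).trans starGammaIso.symm⟩⟩
end

section
/- Let X be a finite simple graph such that γ(X) is connected. Then γ(X) has a cut edge (bridge) if and only if X contains a vertex of degree 1 that is adjacent to a vertex of degree 2. -/
open SimpleGraph

namespace SymEdgeAux

variable {V : Type*} {X : SimpleGraph V}

lemma seg_adj_symm {d d' : X.Dart} (h : (symEdgeGraph X).Adj d d') :
    (symEdgeGraph X).Adj d.symm d'.symm := by
  rcases h with ⟨h1, h2⟩ | ⟨h1, h2⟩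
  · exact Or.inr ⟨h1.symm, fun hc => h2 hc.symm⟩
  · exact Or.inl ⟨h1.symm, fun hc => h2 hc.symm⟩

lemma reach_helper {D : Type*} {G H : SimpleGraph D} (f : D → D) {a b : D} (p : G.Walk a b)
    (hp : ∀ x y : D, G.Adj x y → s(x, y) ∈ p.edges → H.Adj (f x) (f y)) :
    H.Reachable (f a) (f b) := by
  induction p with
  | nil => exact Reachable.refl _
  | cons h q ih =>
    refine (hp _ _ h (by simp)).reachable.trans (ih fun x y hxy hm => hp x y hxy ?_)
    simp [hm]

abbrev delE (X : SimpleGraph V) (e : Sym2 X.Dart) : SimpleGraph X.Dart :=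
  symEdgeGraph X \ fromEdgeSet {e}

lemma delE_adj {e : Sym2 X.Dart} {x y : X.Dart} :
    (delE X e).Adj x y ↔ (symEdgeGraph X).Adj x y ∧ s(x, y) ≠ e := by
  constructor
  · rintro ⟨h1, h2⟩
    refine ⟨h1, fun hEq => h2 ?_⟩
    rw [fromEdgeSet_adj]
    exact ⟨by simp [hEq], h1.ne⟩
  · rintro ⟨h1, h2⟩
    refine ⟨h1, fun hc => ?_⟩
    rw [fromEdgeSet_adj] at hc
    simp only [Set.mem_singleton_iff] at hc
    exact h2 hc.1

lemma sym2_ne_of_ne {α : Type*} {a b c d : α} (h1 : a ≠ c) (h2 : a ≠ d) :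
    s(a, b) ≠ s(c, d) := by
  intro hEq
  rcases Sym2.eq_iff.mp hEq with ⟨e1, -⟩ | ⟨e1, -⟩
  · exact h1 e1
  · exact h2 e1

lemma sym2_ne_of_ne' {α : Type*} {a b c d : α} (h1 : b ≠ c) (h2 : b ≠ d) :
    s(a, b) ≠ s(c, d) := fun hEq => sym2_ne_of_ne h1 h2 ((Sym2.eq_swap).trans hEq)

lemma dart_ne_fst {a b : X.Dart} (h : a.fst ≠ b.fst) : a ≠ b := fun he => h (by rw [he])
lemma dart_ne_snd {a b : X.Dart} (h : a.snd ≠ b.snd) : a ≠ b := fun he => h (by rw [he])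

lemma reach_conj {c d a b : X.Dart} (h : (delE X s(c, d)).Reachable a b) :
    (delE X s(c.symm, d.symm)).Reachable a.symm b.symm := by
  obtain ⟨p⟩ := h
  refine reach_helper Dart.symm p fun x y hxy _ => ?_
  rw [delE_adj] at hxy ⊢
  refine ⟨seg_adj_symm hxy.1, fun hEq => hxy.2 ?_⟩
  rcases Sym2.eq_iff.mp hEq with ⟨e1, e2⟩ | ⟨e1, e2⟩
  · have hx : x = c := by rw [← Dart.symm_symm x, e1, Dart.symm_symm]
    have hy : y = d := by rw [← Dart.symm_symm y, e2, Dart.symm_symm]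
    rw [hx, hy]
  · have hx : x = d := by rw [← Dart.symm_symm x, e1, Dart.symm_symm]
    have hy : y = c := by rw [← Dart.symm_symm y, e2, Dart.symm_symm]
    rw [hx, hy, Sym2.eq_swap]

lemma bridge_conj {c d : X.Dart} (h : (symEdgeGraph X).IsBridge s(c, d)) :
    (symEdgeGraph X).IsBridge s(c.symm, d.symm) := by
  rw [isBridge_iff] at h ⊢
  refine fun hre => h ?_
  have := reach_conj (X := X) hre
  simp only [Dart.symm_symm] at this
  exact this

section Fin

variable [Fintype V] [DecidableEq V] [DecidableRel X.Adj]

lemma degree_eq_one {u0 v0 : V} (h : X.Adj u0 v0) (hu : ∀ t, X.Adj u0 t → t = v0) :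
    X.degree u0 = 1 := by
  have : X.neighborFinset u0 = {v0} := by
    ext t
    simp only [mem_neighborFinset, Finset.mem_singleton]
    exact ⟨fun ht => hu t ht, fun ht => ht ▸ h⟩
  rw [← card_neighborFinset_eq_degree, this, Finset.card_singleton]

lemma degree_eq_two {u0 v0 w0 : V} (hne : u0 ≠ w0) (h1 : X.Adj v0 u0) (h2 : X.Adj v0 w0)
    (hall : ∀ t, X.Adj v0 t → t = u0 ∨ t = w0) : X.degree v0 = 2 := by
  have : X.neighborFinset v0 = {u0, w0} := by
    ext t
    simp only [mem_neighborFinset, Finset.mem_insert, Finset.mem_singleton]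
    refine ⟨fun ht => hall t ht, fun ht => ?_⟩
    rcases ht with rfl | rfl
    · exact h1
    · exact h2
  rw [← card_neighborFinset_eq_degree, this, Finset.card_pair hne]

lemma exists_other_neighbor {u0 v0 : V} (h : X.Adj v0 u0) (hdeg : X.degree v0 = 2) :
    ∃ w0, w0 ≠ u0 ∧ X.Adj v0 w0 ∧ ∀ t, X.Adj v0 t → t = u0 ∨ t = w0 := by
  rw [← card_neighborFinset_eq_degree] at hdeg
  obtain ⟨a, b, hab, hset⟩ := Finset.card_eq_two.mp hdeg
  have hu0 : u0 ∈ X.neighborFinset v0 := (mem_neighborFinset X v0 u0).mpr h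
  rw [hset] at hu0
  simp only [Finset.mem_insert, Finset.mem_singleton] at hu0
  rcases hu0 with rfl | rfl
  · refine ⟨b, hab.symm, ?_, ?_⟩
    · have : b ∈ X.neighborFinset v0 := by rw [hset]; simp
      exact (mem_neighborFinset X v0 b).mp this
    · intro t ht
      have : t ∈ X.neighborFinset v0 := (mem_neighborFinset X v0 t).mpr ht
      rw [hset] at this
      simpa using this
  · refine ⟨a, hab, ?_, ?_⟩
    · have : a ∈ X.neighborFinset v0 := by rw [hset]; simp
      exact (mem_neighborFinset X v0 a).mp this
    · intro t ht
      have : t ∈ X.neighborFinset v0 := (mem_neighborFinset X v0 t).mpr ht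
      rw [hset] at this
      simp only [Finset.mem_insert, Finset.mem_singleton] at this
      tauto

lemma unique_neighbor_of_degree_one {u0 v0 : V} (h : X.Adj u0 v0) (hdeg : X.degree u0 = 1) :
    ∀ t, X.Adj u0 t → t = v0 := by
  rw [← card_neighborFinset_eq_degree] at hdeg
  obtain ⟨a, hset⟩ := Finset.card_eq_one.mp hdeg
  have hv0 : v0 ∈ X.neighborFinset u0 := (mem_neighborFinset X u0 v0).mpr h
  rw [hset, Finset.mem_singleton] at hv0
  intro t ht
  have : t ∈ X.neighborFinset u0 := (mem_neighborFinset X u0 t).mpr ht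
  rw [hset, Finset.mem_singleton] at this
  rw [this, hv0]

/-- Forward direction: a degree-1 vertex adjacent to a degree-2 vertex yields a bridge. -/
lemma config_to_bridge {u0 v0 : V} (h : X.Adj u0 v0) (h1 : X.degree u0 = 1)
    (h2 : X.degree v0 = 2) : ∃ e : Sym2 X.Dart, (symEdgeGraph X).IsBridge e := by
  obtain ⟨w0, hw0u, hw0, hNv⟩ := exists_other_neighbor (X := X) h.symm h2
  have hNu : ∀ t, X.Adj u0 t → t = v0 := unique_neighbor_of_degree_one h h1
  set d : X.Dart := ⟨(u0, v0), h⟩ with hd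
  set d' : X.Dart := ⟨(v0, w0), hw0⟩ with hd'
  have hadj : (symEdgeGraph X).Adj d d' := Or.inl ⟨rfl, fun hc => hw0u hc.symm⟩
  refine ⟨s(d, d'), isBridge_iff.mpr (fun hre => ?_)⟩
  obtain ⟨p⟩ := hre
  have hdd' : d ≠ d' := dart_ne_fst h.ne
  obtain ⟨y, hy, p', -⟩ := Walk.exists_eq_cons_of_ne hdd' p
  have hy' := delE_adj.mp hy
  rcases hy'.1 with ⟨ha, hb⟩ | ⟨ha, hb⟩
  · have hadjy : X.Adj v0 y.snd := by
      have := y.adj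
      rwa [← ha] at this
    have hsnd : y.snd = w0 := by
      rcases hNv y.snd hadjy with hc | hc
      · exact absurd hc.symm hb
      · exact hc
    have hyd' : y = d' := by
      apply Dart.ext
      exact Prod.ext ha.symm hsnd
    exact hy'.2 (by rw [hyd'])
  · have hadjy : X.Adj u0 y.fst := by
      have := y.adj
      rw [ha] at this
      exact this.symm
    exact hb (hNu y.fst hadjy)

noncomputable def rset (a : X.Dart) (e : Sym2 X.Dart) : Finset X.Dart :=
  @Finset.filter _ (fun x => (delE X e).Reachable a x) (Classical.decPred _) Finset.univ

lemma mem_rset {a x : X.Dart} {e : Sym2 X.Dart} :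
    x ∈ rset a e ↔ (delE X e).Reachable a x := by
  classical
  simp [rset, Finset.mem_filter]

lemma rset_conj_card {c d : X.Dart} :
    (rset (X := X) c.symm s(c.symm, d.symm)).card = (rset c s(c, d)).card := by
  refine Finset.card_nbij' Dart.symm Dart.symm ?_ ?_ ?_ ?_
  · intro a ha
    rw [Finset.mem_coe, mem_rset] at ha ⊢
    have := reach_conj (X := X) ha
    simpa [Dart.symm_symm] using this
  · intro a ha
    rw [Finset.mem_coe, mem_rset] at ha ⊢
    exact reach_conj (X := X) ha
  · intro a _; exact Dart.symm_symm a
  · intro a _; exact Dart.symm_symm a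

/-- The core of the reverse direction: a minimal bridge in `γ(X)` forces a degree-1 vertex
adjacent to a degree-2 vertex (here phrased as a contradiction with the negation). -/
lemma main_lemma
    (hnc : ∀ u v : V, X.Adj u v → X.degree u = 1 → X.degree v ≠ 2)
    (d1 d2 : X.Dart) (hadj : (symEdgeGraph X).Adj d1 d2) (hcomp : d1.snd = d2.fst)
    (hbr : (symEdgeGraph X).IsBridge s(d1, d2))
    (hmin : ∀ a b : X.Dart, (symEdgeGraph X).Adj a b → (symEdgeGraph X).IsBridge s(a, b) →
      (rset d1 s(d1, d2)).card ≤ (rset a s(a, b)).card) : False := by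
  have hnotreach : ¬ (delE X s(d1, d2)).Reachable d1 d2 := isBridge_iff.mp hbr
  have huv : X.Adj d1.fst d1.snd := d1.adj
  have hvw : X.Adj d1.snd d2.snd := by rw [hcomp]; exact d2.adj
  have hne_uw : d1.fst ≠ d2.snd := by
    rcases hadj with ⟨-, h2⟩ | ⟨-, h2⟩
    · exact h2
    · exact absurd hcomp.symm h2
  -- Step 1: the middle vertex `v = d1.snd` has no third neighbor.
  have hNv : ∀ x, X.Adj d1.snd x → x = d1.fst ∨ x = d2.snd := by
    intro x hvx
    by_contra hc
    push_neg at hc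
    obtain ⟨hxu, hxw⟩ := hc
    set dvx : X.Dart := ⟨(d1.snd, x), hvx⟩ with hdvx
    set dwv : X.Dart := ⟨(d2.snd, d1.snd), hvw.symm⟩ with hdwv
    set dvu : X.Dart := ⟨(d1.snd, d1.fst), huv.symm⟩ with hdvu
    set dxv : X.Dart := ⟨(x, d1.snd), hvx.symm⟩ with hdxv
    have A1 : (symEdgeGraph X).Adj d1 dvx := Or.inl ⟨rfl, fun hc => hxu hc.symm⟩
    have A2 : (symEdgeGraph X).Adj dvx dwv := Or.inr ⟨rfl, fun hc => hxw hc.symm⟩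
    have A3 : (symEdgeGraph X).Adj dwv dvu := Or.inl ⟨rfl, fun hc => hne_uw hc.symm⟩
    have A4 : (symEdgeGraph X).Adj dvu dxv := Or.inr ⟨rfl, hxu⟩
    have A5 : (symEdgeGraph X).Adj dxv d2 := Or.inl ⟨hcomp, hxw⟩
    have hdvx1 : dvx ≠ d1 := dart_ne_fst huv.ne'
    have hdvx2 : dvx ≠ d2 := dart_ne_snd hxw
    have hdwv1 : dwv ≠ d1 := dart_ne_fst hne_uw.symm
    have hdwv2 : dwv ≠ d2 := dart_ne_snd hvw.ne
    have hdvu1 : dvu ≠ d1 := dart_ne_snd huv.ne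
    have hdvu2 : dvu ≠ d2 := dart_ne_snd hne_uw
    have hdxv1 : dxv ≠ d1 := dart_ne_fst hxu
    have hdxv2 : dxv ≠ d2 := dart_ne_fst (by rw [← hcomp]; exact hvx.ne')
    have E1 : s(d1, dvx) ≠ s(d1, d2) := sym2_ne_of_ne' hdvx1 hdvx2
    have E2 : s(dvx, dwv) ≠ s(d1, d2) := sym2_ne_of_ne hdvx1 hdvx2
    have E3 : s(dwv, dvu) ≠ s(d1, d2) := sym2_ne_of_ne hdwv1 hdwv2
    have E4 : s(dvu, dxv) ≠ s(d1, d2) := sym2_ne_of_ne hdvu1 hdvu2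
    have E5 : s(dxv, d2) ≠ s(d1, d2) := sym2_ne_of_ne hdxv1 hdxv2
    exact hnotreach
      (((delE_adj.mpr ⟨A1, E1⟩).reachable).trans
        (((delE_adj.mpr ⟨A2, E2⟩).reachable).trans
          (((delE_adj.mpr ⟨A3, E3⟩).reachable).trans
            (((delE_adj.mpr ⟨A4, E4⟩).reachable).trans
              ((delE_adj.mpr ⟨A5, E5⟩).reachable)))))
  -- Step 2: the tail vertex `u = d1.fst` has a second neighbor (else we get the configuration).
  have hz : ∃ z, X.Adj d1.fst z ∧ z ≠ d1.snd := by
    by_contra hc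
    push_neg at hc
    have hdeg1 : X.degree d1.fst = 1 := degree_eq_one huv fun t ht => hc t ht
    have hdeg2 : X.degree d1.snd = 2 := degree_eq_two hne_uw huv.symm hvw hNv
    exact hnc _ _ huv hdeg1 hdeg2
  obtain ⟨z, huz, hzv⟩ := hz
  set dz : X.Dart := ⟨(z, d1.fst), huz.symm⟩ with hdz
  have hzadj : (symEdgeGraph X).Adj dz d1 := Or.inl ⟨rfl, hzv⟩
  have hdzne1 : dz ≠ d1 := dart_ne_snd huv.ne
  have hdzne2 : dz ≠ d2 := dart_ne_snd hne_uw
  have hE_d1dz : s(d1, dz) ≠ s(d1, d2) := sym2_ne_of_ne' hdzne1 hdzne2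
  -- Step 3: the edge `{dz, d1}` cannot be a bridge, by minimality.
  by_cases hbr' : (symEdgeGraph X).IsBridge s(dz, d1)
  · have hmin' := hmin dz d1 hzadj hbr'
    have hnr : ¬ (delE X s(dz, d1)).Reachable dz d1 := isBridge_iff.mp hbr'
    have hsub : rset dz s(dz, d1) ⊆ (rset d1 s(d1, d2)).erase d1 := by
      intro x hx
      rw [mem_rset] at hx
      obtain ⟨p⟩ := hx
      have hd1sup : d1 ∉ p.support := fun hmem => hnr ⟨p.takeUntil d1 hmem⟩
      rw [Finset.mem_erase, mem_rset]
      constructor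
      · intro hxd1
        exact hd1sup (hxd1 ▸ p.end_mem_support)
      · refine ((delE_adj.mpr ⟨hzadj.symm, hE_d1dz⟩).reachable).trans ?_
        exact reach_helper (fun t => t) p fun x' y' hxy hm => by
          rw [delE_adj] at hxy ⊢
          refine ⟨hxy.1, fun hEq => ?_⟩
          exact hd1sup (p.fst_mem_support_of_mem_edges (hEq ▸ hm))
    have hd1mem : d1 ∈ rset d1 s(d1, d2) := mem_rset.mpr (Reachable.refl _)
    have hlt : (rset dz s(dz, d1)).card < (rset d1 s(d1, d2)).card :=
      lt_of_le_of_lt (Finset.card_le_card hsub) (Finset.card_erase_lt_of_mem hd1mem)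
    exact absurd hmin' (not_le.mpr hlt)
  · -- Step 4: a walk from `dz` to `d1` avoiding that edge.
    rw [isBridge_iff_forall_walk_mem_edges] at hbr'
    push_neg at hbr'
    obtain ⟨p0, hp0⟩ := hbr'
    have hqe : s(dz, d1) ∉ (p0.toPath : (symEdgeGraph X).Walk dz d1).edges :=
      fun hm => hp0 (Walk.edges_toPath_subset p0 hm)
    have hrp : ((p0.toPath : (symEdgeGraph X).Walk dz d1).reverse).IsPath :=
      (p0.toPath.2).reverse
    have hre : s(dz, d1) ∉ ((p0.toPath : (symEdgeGraph X).Walk dz d1).reverse).edges := by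
      rw [Walk.edges_reverse, List.mem_reverse]
      exact hqe
    obtain ⟨x, hx1, r', hr'eq⟩ := Walk.exists_eq_cons_of_ne hdzne1.symm
      ((p0.toPath : (symEdgeGraph X).Walk dz d1).reverse)
    rw [hr'eq] at hrp hre
    have hxd1ns : d1 ∉ r'.support := by
      rw [Walk.cons_isPath_iff] at hrp
      exact hrp.2
    have hxnedz : x ≠ dz := by
      intro hc
      subst hc
      apply hre
      rw [Walk.edges_cons, Sym2.eq_swap]
      exact List.mem_cons_self
    rcases hx1 with ⟨ha, hb⟩ | ⟨ha, hb⟩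
    · -- first step of the return path goes to `d2`; contradiction with the bridge.
      have hadjvx : X.Adj d1.snd x.snd := by
        have := x.adj
        rwa [← ha] at this
      have hsnd : x.snd = d2.snd := by
        rcases hNv x.snd hadjvx with hc | hc
        · exact absurd hc.symm hb
        · exact hc
      have hxeq : x = d2 := Dart.ext _ _ (Prod.ext (ha.symm.trans hcomp) hsnd)
      have R2 : (delE X s(d1, d2)).Reachable dz x := by
        refine reach_helper (fun t => t) r'.reverse fun x' y' hxy hm => ?_
        rw [delE_adj]
        refine ⟨hxy, fun hEq => ?_⟩
        apply hxd1ns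
        rw [Walk.edges_reverse, List.mem_reverse] at hm
        exact r'.fst_mem_support_of_mem_edges (hEq ▸ hm)
      exact hnotreach (((delE_adj.mpr ⟨hzadj.symm, hE_d1dz⟩).reachable).trans (hxeq ▸ R2))
    · -- first step of the return path goes to a dart `(x.fst, u)`; reversal is possible.
      have hadj_t : X.Adj d1.fst x.fst := by
        have := x.adj
        rw [ha] at this
        exact this.symm
      have htz : x.fst ≠ z := by
        intro hc
        exact hxnedz (Dart.ext _ _ (Prod.ext hc ha))
      set dut : X.Dart := ⟨(d1.fst, x.fst), hadj_t⟩ with hdut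
      have B2 : (symEdgeGraph X).Adj dz dut := Or.inl ⟨rfl, fun hc => htz hc.symm⟩
      have hdut1 : dut ≠ d1 := dart_ne_snd hb
      have hdut2 : dut ≠ d2 := dart_ne_fst (by rw [← hcomp]; exact huv.ne)
      have E2' : s(dz, dut) ≠ s(d1, d2) := sym2_ne_of_ne hdzne1 hdzne2
      have B3 : (symEdgeGraph X).Adj dut d1.symm := Or.inr ⟨rfl, fun hc => hb hc.symm⟩
      have E3' : s(dut, d1.symm) ≠ s(d1, d2) := sym2_ne_of_ne hdut1 hdut2
      have hRd1s : (delE X s(d1, d2)).Reachable d1 d1.symm :=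
        ((delE_adj.mpr ⟨hzadj.symm, hE_d1dz⟩).reachable).trans
          (((delE_adj.mpr ⟨B2, E2'⟩).reachable).trans ((delE_adj.mpr ⟨B3, E3'⟩).reachable))
      have B4 : (symEdgeGraph X).Adj d1.symm d2.symm :=
        Or.inr ⟨hcomp.symm, fun hc => hne_uw hc.symm⟩
      have hds1 : d1.symm ≠ d1 := Dart.symm_ne d1
      have hds2 : d1.symm ≠ d2 := dart_ne_snd hne_uw
      have E4' : s(d1.symm, d2.symm) ≠ s(d1, d2) := sym2_ne_of_ne hds1 hds2
      have hRd2s : (delE X s(d1, d2)).Reachable d1 d2.symm :=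
        hRd1s.trans (delE_adj.mpr ⟨B4, E4'⟩).reachable
      have himg : ∀ b : X.Dart, (delE X s(d1, d2)).Reachable d2 b →
          (delE X s(d1, d2)).Reachable d1 b.symm := by
        intro b hbre
        obtain ⟨p⟩ := hbre
        by_cases hsup : d1.symm ∈ p.support
        · exact (hnotreach (hRd1s.trans (Reachable.symm ⟨p.takeUntil _ hsup⟩))).elim
        · refine hRd2s.trans ?_
          refine reach_helper Dart.symm p fun x' y' hxy hm => ?_
          rw [delE_adj] at hxy ⊢
          refine ⟨seg_adj_symm hxy.1, fun hEq => ?_⟩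
          rcases Sym2.eq_iff.mp hEq with ⟨e1, -⟩ | ⟨-, e2⟩
          · apply hsup
            have hx' : x' = d1.symm := by rw [← Dart.symm_symm x', e1]
            exact hx' ▸ p.fst_mem_support_of_mem_edges hm
          · apply hsup
            have hy' : y' = d1.symm := by rw [← Dart.symm_symm y', e2]
            exact hy' ▸ p.snd_mem_support_of_mem_edges hm
      have hswap : s(d2, d1) = s(d1, d2) := Sym2.eq_swap
      have hminBA := hmin d2 d1 hadj.symm (by rw [hswap]; exact hbr)
      rw [hswap] at hminBA
      have hinj : Function.Injective (Dart.symm : X.Dart → X.Dart) :=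
        Dart.symm_involutive.injective
      have hsub : (rset d2 s(d1, d2)).image Dart.symm ⊆ rset d1 s(d1, d2) := by
        intro y hy
        rw [Finset.mem_image] at hy
        obtain ⟨b, hbmem, rfl⟩ := hy
        exact mem_rset.mpr (himg b (mem_rset.mp hbmem))
      have hcard1 : ((rset d2 s(d1, d2)).image Dart.symm).card = (rset d2 s(d1, d2)).card :=
        Finset.card_image_of_injective _ hinj
      have heq : (rset d2 s(d1, d2)).image Dart.symm = rset d1 s(d1, d2) :=
        Finset.eq_of_subset_of_card_le hsub (by rw [hcard1]; exact hminBA)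
      have hd1s : d1.symm ∈ rset d1 s(d1, d2) := mem_rset.mpr hRd1s
      rw [← heq, Finset.mem_image] at hd1s
      obtain ⟨b, hbmem, hbs⟩ := hd1s
      have hbd : b = d1 := hinj hbs
      rw [hbd] at hbmem
      exact hnotreach (Reachable.symm (mem_rset.mp hbmem))

end Fin

end SymEdgeAux

/-- Let `X` be a finite simple graph such that `γ(X)` is connected. Then `γ(X)` has a cut edge
(bridge) iff `X` contains a vertex of degree 1 adjacent to a vertex of degree 2. -/
theorem symEdgeGraph_has_bridge_iff {V : Type*} [Fintype V] [DecidableEq V]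
    (X : SimpleGraph V) [DecidableRel X.Adj] (h : (symEdgeGraph X).Connected) :
    (∃ e : Sym2 X.Dart, (symEdgeGraph X).IsBridge e) ↔
      ∃ u v : V, X.Adj u v ∧ X.degree u = 1 ∧ X.degree v = 2 := by
  classical
  open SymEdgeAux in
  constructor
  · rintro ⟨e, hbr⟩
    by_contra hcon
    push_neg at hcon
    induction e using Sym2.ind with
    | _ a0 b0 =>
      have hadj0 : (symEdgeGraph X).Adj a0 b0 := hbr.reachable_iff_adj.mp (h.preconnected a0 b0)
      set S : Finset (X.Dart × X.Dart) := Finset.univ.filter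
        (fun pq => (symEdgeGraph X).Adj pq.1 pq.2 ∧ (symEdgeGraph X).IsBridge s(pq.1, pq.2))
        with hSdef
      have hS : (a0, b0) ∈ S := by
        rw [hSdef, Finset.mem_filter]
        exact ⟨Finset.mem_univ _, hadj0, hbr⟩
      obtain ⟨⟨d1, d2⟩, hdS, hminS⟩ := Finset.exists_min_image S
        (fun pq => (rset pq.1 s(pq.1, pq.2)).card) ⟨(a0, b0), hS⟩
      rw [hSdef, Finset.mem_filter] at hdS
      obtain ⟨-, hadj, hbridge⟩ := hdS
      have hmin : ∀ a b : X.Dart, (symEdgeGraph X).Adj a b →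
          (symEdgeGraph X).IsBridge s(a, b) →
          (rset d1 s(d1, d2)).card ≤ (rset a s(a, b)).card := by
        intro a b ha hb
        exact hminS (a, b) (by rw [hSdef, Finset.mem_filter]; exact ⟨Finset.mem_univ _, ha, hb⟩)
      rcases hadj with ⟨h1, h2⟩ | ⟨h1, h2⟩
      · exact main_lemma hcon d1 d2 (Or.inl ⟨h1, h2⟩) h1 hbridge hmin
      · have hadj' : (symEdgeGraph X).Adj d1.symm d2.symm :=
          seg_adj_symm (Or.inr ⟨h1, h2⟩)
        have hbr2 : (symEdgeGraph X).IsBridge s(d1.symm, d2.symm) := bridge_conj hbridge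
        have hmin' : ∀ a b : X.Dart, (symEdgeGraph X).Adj a b →
            (symEdgeGraph X).IsBridge s(a, b) →
            (rset d1.symm s(d1.symm, d2.symm)).card ≤ (rset a s(a, b)).card := by
          intro a b ha hb
          rw [rset_conj_card]
          exact hmin a b ha hb
        exact main_lemma hcon d1.symm d2.symm hadj' h1.symm hbr2 hmin'
  · rintro ⟨u, v, h1, h2, h3⟩
    exact config_to_bridge h1 h2 h3
end

section
/- Let X be a finite simple graph and for i ≥ 0 define γ⁰(X) = X and γⁱ(X) = γ(γ^{i-1}(X)). Then for every i ≥ 1, the number of triangles in γ^{i-1}(X) equals 2^{i-1} times the number of triangles in X. -/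
open SimpleGraph

/-- The iterated symmetric edge graph `γⁱ(X)`, as a pair (vertex type, graph):
`γ⁰(X) = X` and `γⁱ(X) = γ(γ^{i-1}(X))`. -/
def iterSymEdge {V : Type} (X : SimpleGraph V) : ℕ → Σ W : Type, SimpleGraph W
  | 0 => ⟨V, X⟩
  | (i + 1) => ⟨(iterSymEdge X i).2.Dart, symEdgeGraph (iterSymEdge X i).2⟩

/-- Cyclic configuration of three darts. -/
def DCyc {V : Type*} {X : SimpleGraph V} (a b c : X.Dart) : Prop :=
  a.snd = b.fst ∧ b.snd = c.fst ∧ c.snd = a.fst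

lemma dcyc_clique {V : Type*} [DecidableEq V] {X : SimpleGraph V} {a b c : X.Dart} (h : DCyc a b c) :
    (symEdgeGraph X).IsNClique 3 {a, b, c} := by
  obtain ⟨h1, h2, h3⟩ := h
  refine is3Clique_triple_iff.2 ⟨?_, ?_, ?_⟩
  · exact Or.inl ⟨h1, by rw [← h3, h2]; exact c.snd_ne_fst⟩
  · exact Or.inr ⟨h3, by rw [← h2, h1]; exact b.snd_ne_fst⟩
  · exact Or.inl ⟨h2, by rw [← h1, h3]; exact a.snd_ne_fst⟩

lemma dcyc_of_adj {V : Type*} {X : SimpleGraph V} {a b c : X.Dart}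
    (hac : (symEdgeGraph X).Adj a c) (hbc : (symEdgeGraph X).Adj b c)
    (h : a.snd = b.fst) : DCyc a b c := by
  rcases hbc with ⟨h2, -⟩ | ⟨h2, -⟩
  · rcases hac with ⟨h3, -⟩ | ⟨h3, -⟩
    · exact absurd (show b.fst = b.snd by rw [← h, h2]; exact h3) b.fst_ne_snd
    · exact ⟨h, h2, h3⟩
  · rcases hac with ⟨h3, -⟩ | ⟨h3, -⟩
    · exact absurd (show c.fst = c.snd by rw [← h3, h, ← h2]) c.fst_ne_snd
    · exact absurd (show a.fst = a.snd by rw [← h3, h2, ← h]) a.fst_ne_snd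

lemma clique_structure {V : Type*} [DecidableEq V] {X : SimpleGraph V} {s : Finset X.Dart}
    (hs : (symEdgeGraph X).IsNClique 3 s) :
    ∃ a b c : X.Dart, DCyc a b c ∧ s = {a, b, c} := by
  obtain ⟨a, b, c, hab, hac, hbc, rfl⟩ := is3Clique_iff.1 hs
  rcases hab with ⟨h, -⟩ | ⟨h, -⟩
  · exact ⟨a, b, c, dcyc_of_adj hac hbc h, rfl⟩
  · exact ⟨b, a, c, dcyc_of_adj hbc hac h, Finset.insert_comm a b {c}⟩

lemma dcyc_ne12 {V : Type*} {X : SimpleGraph V} {a b c : X.Dart} (h : DCyc a b c) :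
    a.fst ≠ b.fst := by rw [← h.1]; exact a.fst_ne_snd

lemma dcyc_ne13 {V : Type*} {X : SimpleGraph V} {a b c : X.Dart} (h : DCyc a b c) :
    a.fst ≠ c.fst := by
  intro he
  exact c.snd_ne_fst (h.2.2.trans he)

lemma dcyc_rot {V : Type*} {X : SimpleGraph V} {a b c : X.Dart} (h : DCyc a b c) :
    DCyc b c a := ⟨h.2.1, h.2.2, h.1⟩

lemma image_triple {V : Type*} [DecidableEq V] {X : SimpleGraph V} (a b c : X.Dart) :
    ({a, b, c} : Finset X.Dart).image (fun d => d.fst) = {a.fst, b.fst, c.fst} := by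
  simp [Finset.image_insert]

lemma dcyc_heads_clique {V : Type*} [DecidableEq V] {X : SimpleGraph V} {a b c : X.Dart} (h : DCyc a b c) :
    X.IsNClique 3 {a.fst, b.fst, c.fst} := by
  refine is3Clique_triple_iff.2 ⟨?_, ?_, ?_⟩
  · exact h.1 ▸ a.adj
  · exact (h.2.2 ▸ c.adj).symm
  · exact h.2.1 ▸ b.adj

lemma rot3 {α : Type*} [DecidableEq α] (x y z : α) :
    ({x, y, z} : Finset α) = {y, z, x} := by
  ext t; simp only [Finset.mem_insert, Finset.mem_singleton]; tauto

lemma dart_eq {V : Type*} {X : SimpleGraph V} (a : X.Dart) {x y : V}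
    (h1 : a.fst = x) (h2 : a.snd = y) (hxy : X.Adj x y) : a = ⟨(x, y), hxy⟩ :=
  SimpleGraph.Dart.ext _ _ (Prod.ext h1 h2)

lemma fiber_eq {V : Type*} [Fintype V] [DecidableEq V] (X : SimpleGraph V)
    [DecidableRel X.Adj] [DecidableRel (symEdgeGraph X).Adj]
    {u v w : V} (huv : X.Adj u v) (huw : X.Adj u w) (hvw : X.Adj v w) :
    ((symEdgeGraph X).cliqueFinset 3).filter
        (fun s => s.image (fun d => d.fst) = ({u, v, w} : Finset V)) =
      {({⟨(u,v),huv⟩, ⟨(v,w),hvw⟩, ⟨(w,u),huw.symm⟩} : Finset X.Dart),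
       ({⟨(v,u),huv.symm⟩, ⟨(u,w),huw⟩, ⟨(w,v),hvw.symm⟩} : Finset X.Dart)} := by
  ext s
  simp only [Finset.mem_filter, Finset.mem_insert, Finset.mem_singleton,
    mem_cliqueFinset_iff]
  constructor
  · rintro ⟨hs, him⟩
    obtain ⟨a, b, c, hC, rfl⟩ := clique_structure hs
    rw [image_triple] at him
    have n12 := dcyc_ne12 hC
    have n13 := dcyc_ne13 hC
    have n23 := dcyc_ne12 (dcyc_rot hC)
    have ha : a.fst = u ∨ a.fst = v ∨ a.fst = w := by
      have : a.fst ∈ ({u, v, w} : Finset V) := him ▸ (by simp)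
      simpa using this
    have hb : b.fst = u ∨ b.fst = v ∨ b.fst = w := by
      have : b.fst ∈ ({u, v, w} : Finset V) := him ▸ (by simp)
      simpa using this
    have hc : c.fst = u ∨ c.fst = v ∨ c.fst = w := by
      have : c.fst ∈ ({u, v, w} : Finset V) := him ▸ (by simp)
      simpa using this
    obtain ⟨h1, h2, h3⟩ := hC
    rcases ha with hau | hav | haw
    · rcases hb with hbu | hbv | hbw
      · exact absurd (hau.trans hbu.symm) n12
      · rcases hc with hcu | hcv | hcw
        · exact absurd (hau.trans hcu.symm) n13
        · exact absurd (hbv.trans hcv.symm) n23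
        · exact Or.inl (by
            rw [dart_eq a hau (h1.trans hbv) huv, dart_eq b hbv (h2.trans hcw) hvw,
              dart_eq c hcw (h3.trans hau) huw.symm])
      · rcases hc with hcu | hcv | hcw
        · exact absurd (hau.trans hcu.symm) n13
        · exact Or.inr (by
            rw [dart_eq a hau (h1.trans hbw) huw, dart_eq b hbw (h2.trans hcv) hvw.symm,
              dart_eq c hcv (h3.trans hau) huv.symm]
            exact (rot3 _ _ _).symm)
        · exact absurd (hbw.trans hcw.symm) n23
    · rcases hb with hbu | hbv | hbw
      · rcases hc with hcu | hcv | hcw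
        · exact absurd (hbu.trans hcu.symm) n23
        · exact absurd (hav.trans hcv.symm) n13
        · exact Or.inr (by
            rw [dart_eq a hav (h1.trans hbu) huv.symm, dart_eq b hbu (h2.trans hcw) huw,
              dart_eq c hcw (h3.trans hav) hvw.symm])
      · exact absurd (hav.trans hbv.symm) n12
      · rcases hc with hcu | hcv | hcw
        · exact Or.inl (by
            rw [dart_eq a hav (h1.trans hbw) hvw, dart_eq b hbw (h2.trans hcu) huw.symm,
              dart_eq c hcu (h3.trans hav) huv]
            exact (rot3 _ _ _).symm)
        · exact absurd (hav.trans hcv.symm) n13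
        · exact absurd (hbw.trans hcw.symm) n23
    · rcases hb with hbu | hbv | hbw
      · rcases hc with hcu | hcv | hcw
        · exact absurd (hbu.trans hcu.symm) n23
        · exact Or.inl (by
            rw [dart_eq a haw (h1.trans hbu) huw.symm, dart_eq b hbu (h2.trans hcv) huv,
              dart_eq c hcv (h3.trans haw) hvw]
            exact rot3 _ _ _)
        · exact absurd (haw.trans hcw.symm) n13
      · rcases hc with hcu | hcv | hcw
        · exact Or.inr (by
            rw [dart_eq a haw (h1.trans hbv) hvw.symm, dart_eq b hbv (h2.trans hcu) huv.symm,
              dart_eq c hcu (h3.trans haw) huw]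
            exact rot3 _ _ _)
        · exact absurd (hbv.trans hcv.symm) n23
        · exact absurd (haw.trans hcw.symm) n13
      · exact absurd (haw.trans hbw.symm) n12
  · rintro (rfl | rfl)
    · refine ⟨dcyc_clique (a := ⟨(u,v),huv⟩) (b := ⟨(v,w),hvw⟩) (c := ⟨(w,u),huw.symm⟩)
        ⟨rfl, rfl, rfl⟩, ?_⟩
      rw [image_triple]
    · refine ⟨dcyc_clique (a := ⟨(v,u),huv.symm⟩) (b := ⟨(u,w),huw⟩) (c := ⟨(w,v),hvw.symm⟩)
        ⟨rfl, rfl, rfl⟩, ?_⟩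
      rw [image_triple]
      exact Finset.insert_comm v u {w}

lemma key {V : Type*} [Fintype V] (X : SimpleGraph V) :
    ((symEdgeGraph X).cliqueSet 3).ncard = 2 * (X.cliqueSet 3).ncard := by
  classical
  rw [← coe_cliqueFinset, ← coe_cliqueFinset, Set.ncard_coe_finset, Set.ncard_coe_finset]
  have hmem : ∀ s ∈ (symEdgeGraph X).cliqueFinset 3,
      s.image (fun d => d.fst) ∈ X.cliqueFinset 3 := by
    intro s hs
    obtain ⟨a, b, c, hC, rfl⟩ := clique_structure (mem_cliqueFinset_iff.1 hs)
    rw [image_triple]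
    exact mem_cliqueFinset_iff.2 (dcyc_heads_clique hC)
  rw [Finset.card_eq_sum_card_fiberwise hmem]
  have hfib : ∀ t ∈ X.cliqueFinset 3,
      (((symEdgeGraph X).cliqueFinset 3).filter
        (fun s => s.image (fun d => d.fst) = t)).card = 2 := by
    intro t ht
    obtain ⟨u, v, w, huv, huw, hvw, rfl⟩ := is3Clique_iff.1 (mem_cliqueFinset_iff.1 ht)
    rw [fiber_eq X huv huw hvw]
    rw [Finset.card_insert_of_notMem, Finset.card_singleton]
    simp only [Finset.mem_singleton]
    intro h
    have : (⟨(u,v),huv⟩ : X.Dart) ∈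
        ({⟨(v,u),huv.symm⟩, ⟨(u,w),huw⟩, ⟨(w,v),hvw.symm⟩} : Finset X.Dart) := by
      rw [← h]; simp
    simp only [Finset.mem_insert, Finset.mem_singleton, SimpleGraph.Dart.ext_iff,
      Prod.ext_iff] at this
    rcases this with ⟨h1, h2⟩ | ⟨h1, h2⟩ | ⟨h1, h2⟩
    · exact huv.ne h1
    · exact hvw.ne h2
    · exact huw.ne h1
  rw [Finset.sum_congr rfl hfib, Finset.sum_const, smul_eq_mul, mul_comm]

/-- Fintype instance for iterated symmetric edge graph vertex types. -/
noncomputable def iterFin {V : Type} [Fintype V] (X : SimpleGraph V) :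
    ∀ k, Fintype (iterSymEdge X k).1
  | 0 => inferInstanceAs (Fintype V)
  | (k + 1) => @SimpleGraph.Dart.fintype _ _ (iterFin X k) (Classical.decRel _)

lemma aux_iter {V : Type} [Fintype V] (X : SimpleGraph V) :
    ∀ k, ((iterSymEdge X k).2.cliqueSet 3).ncard = 2 ^ k * (X.cliqueSet 3).ncard
  | 0 => by simp [iterSymEdge]
  | (k + 1) => by
    haveI := iterFin X k
    have h1 : ((iterSymEdge X (k + 1)).2.cliqueSet 3).ncard
        = 2 * (((iterSymEdge X k).2).cliqueSet 3).ncard := key (iterSymEdge X k).2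
    rw [h1, aux_iter X k, pow_succ]
    ring

/-- For every `i ≥ 1`, the number of triangles in `γ^{i-1}(X)` equals `2^{i-1}` times the
number of triangles in `X`. -/
theorem triangles_iterSymEdge {V : Type} [Fintype V] (X : SimpleGraph V)
    (i : ℕ) (hi : 1 ≤ i) :
    ((iterSymEdge X (i - 1)).2.cliqueSet 3).ncard = 2 ^ (i - 1) * (X.cliqueSet 3).ncard :=
  aux_iter X (i - 1)
end

section
/- Let X be a finite connected simple graph. Let t' be the number of triangles in the line graph L(X), t₂ the number of triangles in the symmetric edge graph γ(X), and t₃ the number of triangles in L(X''), where X'' is the Kronecker double cover of X. Then 2t' = t₂ + t₃. -/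
open SimpleGraph

/-- The Kronecker double cover `X''` of a simple graph `X`: the tensor product `X × K₂`.
Its vertices are pairs `(v, i)` with `v` a vertex of `X` and `i : Bool`, and `(v, i)` is
adjacent to `(w, j)` iff `v` is adjacent to `w` in `X` and `i ≠ j`. -/
def kroneckerCover {V : Type*} (X : SimpleGraph V) : SimpleGraph (V × Bool) where
  Adj a b := X.Adj a.1 b.1 ∧ a.2 ≠ b.2
  symm := ⟨fun _ _ h => ⟨h.1.symm, h.2.symm⟩⟩
  loopless := ⟨fun _ h => h.2 rfl⟩

namespace TwoTri

attribute [local instance] Classical.propDecidable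

/-! ### Generic helper lemmas -/

variable {W : Type*} {G : SimpleGraph W}

lemma sym2_eq_pair {z : Sym2 W} {v w : W} (hv : v ∈ z) (hw : w ∈ z) (hne : v ≠ w) :
    z = s(v, w) := by
  induction z with
  | _ x y =>
    rw [Sym2.mem_iff] at hv hw
    rcases hv with rfl | rfl <;> rcases hw with rfl | rfl
    · exact absurd rfl hne
    · rfl
    · exact Sym2.eq_swap
    · exact absurd rfl hne

/-- The edge of `G` corresponding to an adjacency. -/
def GE {x y : W} (h : G.Adj x y) : G.edgeSet := ⟨s(x, y), G.mem_edgeSet.2 h⟩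

@[simp] lemma GE_val {x y : W} (h : G.Adj x y) : (GE h : Sym2 W) = s(x, y) := rfl

lemma isNClique_image {α β : Type*} {G : SimpleGraph α} {H : SimpleGraph β} {F : α → β}
    (hF : ∀ x y, G.Adj x y → H.Adj (F x) (F y)) {n : ℕ} {t : Finset α}
    (ht : G.IsNClique n t) : H.IsNClique n (t.image F) := by
  constructor
  · rintro b1 hb1 b2 hb2 hne
    simp only [Finset.coe_image, Set.mem_image, Finset.mem_coe] at hb1 hb2
    obtain ⟨a1, ha1, rfl⟩ := hb1
    obtain ⟨a2, ha2, rfl⟩ := hb2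
    exact hF _ _ (ht.1 ha1 ha2 (fun h => hne (by rw [h])))
  · rw [Finset.card_image_of_injOn, ht.2]
    intro a1 h1 a2 h2 he
    by_contra hne
    exact (hF _ _ (ht.1 h1 h2 hne)).ne he

lemma two_mul_of_fibers {α β : Type*} [Finite α] [Finite β] (F : α → β) (P : Set α)
    (h : ∀ b ∈ F '' P, {a | a ∈ P ∧ F a = b}.ncard = 2) :
    P.ncard = 2 * (F '' P).ncard := by
  letI := Fintype.ofFinite α
  letI := Fintype.ofFinite β
  have key : P.toFinset.card = ∑ b ∈ (F '' P).toFinset, (P.toFinset.filter fun a => F a = b).card :=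
    Finset.card_eq_sum_card_fiberwise (by
      intro x hx
      rw [Finset.mem_coe, Set.mem_toFinset] at hx ⊢
      exact Set.mem_image_of_mem F hx)
  rw [Set.ncard_eq_toFinset_card', Set.ncard_eq_toFinset_card', key]
  rw [Finset.sum_congr rfl (fun b hb => ?_), Finset.sum_const, smul_eq_mul, mul_comm]
  rw [Set.mem_toFinset] at hb
  have h2 := h b hb
  rw [Set.ncard_eq_toFinset_card'] at h2
  rw [← h2]
  congr 1
  ext a
  simp [Set.mem_toFinset]

/-- Sunflower classification of triangles in a line graph. -/
lemma triangle_classify {s : Finset G.edgeSet} (hs : G.lineGraph.IsNClique 3 s) :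
    (∃ v, ∀ e ∈ s, v ∈ (e : Sym2 W)) ∨
    (∃ (x y z : W) (h1 : G.Adj x y) (h2 : G.Adj y z) (h3 : G.Adj z x),
        s = {GE h1, GE h2, GE h3}) := by
  obtain ⟨e1, e2, e3, h12, h13, h23, rfl⟩ := Finset.card_eq_three.mp hs.2
  have m1 : e1 ∈ ({e1, e2, e3} : Finset G.edgeSet) := by simp
  have m2 : e2 ∈ ({e1, e2, e3} : Finset G.edgeSet) := by simp
  have m3 : e3 ∈ ({e1, e2, e3} : Finset G.edgeSet) := by simp
  have A12 := hs.1 m1 m2 h12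
  have A13 := hs.1 m1 m3 h13
  have A23 := hs.1 m2 m3 h23
  obtain ⟨x, hx1, hx2⟩ := A12.2
  rw [SetLike.mem_coe] at hx1 hx2
  obtain ⟨a, he1⟩ : ∃ a, s(x, a) = (e1 : Sym2 W) := ⟨_, Sym2.other_spec hx1⟩
  obtain ⟨c, he2⟩ : ∃ c, s(x, c) = (e2 : Sym2 W) := ⟨_, Sym2.other_spec hx2⟩
  have hac : a ≠ c := by
    rintro rfl
    exact h12 (Subtype.ext (by rw [← he1, ← he2]))
  by_cases hx3 : x ∈ (e3 : Sym2 W)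
  · left
    refine ⟨x, fun e he => ?_⟩
    simp only [Finset.mem_insert, Finset.mem_singleton] at he
    rcases he with rfl | rfl | rfl <;> assumption
  · right
    have hae3 : a ∈ (e3 : Sym2 W) := by
      obtain ⟨w, hw1, hw3⟩ := A13.2
      rw [SetLike.mem_coe] at hw1 hw3
      rw [← he1, Sym2.mem_iff] at hw1
      rcases hw1 with rfl | rfl
      · exact absurd hw3 hx3
      · exact hw3
    have hce3 : c ∈ (e3 : Sym2 W) := by
      obtain ⟨w, hw2, hw3⟩ := A23.2
      rw [SetLike.mem_coe] at hw2 hw3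
      rw [← he2, Sym2.mem_iff] at hw2
      rcases hw2 with rfl | rfl
      · exact absurd hw3 hx3
      · exact hw3
    have he3 : (e3 : Sym2 W) = s(a, c) := sym2_eq_pair hae3 hce3 hac
    have hxa : G.Adj x a := G.mem_edgeSet.1 (he1 ▸ e1.2)
    have hxc : G.Adj x c := G.mem_edgeSet.1 (he2 ▸ e2.2)
    have hac' : G.Adj a c := G.mem_edgeSet.1 (he3 ▸ e3.2)
    refine ⟨x, a, c, hxa, hac', hxc.symm, ?_⟩
    have E1 : e1 = GE hxa := Subtype.ext (show (e1 : Sym2 W) = s(x, a) from he1.symm)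
    have E2 : e2 = GE hxc.symm :=
      Subtype.ext (show (e2 : Sym2 W) = s(c, x) by rw [← he2]; exact Sym2.eq_swap)
    have E3 : e3 = GE hac' := Subtype.ext (show (e3 : Sym2 W) = s(a, c) from he3)
    rw [E1, E2, E3]
    ext e
    simp only [Finset.mem_insert, Finset.mem_singleton]
    tauto

/-- Any 3-clique in a line graph all of whose edges pass through `v` is a star at `v`. -/
lemma star_form {s : Finset G.edgeSet} (hs : G.lineGraph.IsNClique 3 s) {v : W}
    (hv : ∀ e ∈ s, v ∈ (e : Sym2 W)) :
    ∃ (a b c : W), a ≠ b ∧ b ≠ c ∧ a ≠ c ∧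
      ∃ (h1 : G.Adj v a) (h2 : G.Adj v b) (h3 : G.Adj v c),
        s = {GE h1, GE h2, GE h3} := by
  obtain ⟨e1, e2, e3, h12, h13, h23, rfl⟩ := Finset.card_eq_three.mp hs.2
  have m1 : e1 ∈ ({e1, e2, e3} : Finset G.edgeSet) := by simp
  have m2 : e2 ∈ ({e1, e2, e3} : Finset G.edgeSet) := by simp
  have m3 : e3 ∈ ({e1, e2, e3} : Finset G.edgeSet) := by simp
  have hv1 := hv e1 m1
  have hv2 := hv e2 m2
  have hv3 := hv e3 m3
  obtain ⟨a, he1⟩ : ∃ a, s(v, a) = (e1 : Sym2 W) := ⟨_, Sym2.other_spec hv1⟩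
  obtain ⟨b, he2⟩ : ∃ b, s(v, b) = (e2 : Sym2 W) := ⟨_, Sym2.other_spec hv2⟩
  obtain ⟨c, he3⟩ : ∃ c, s(v, c) = (e3 : Sym2 W) := ⟨_, Sym2.other_spec hv3⟩
  have hab : a ≠ b := by rintro rfl; exact h12 (Subtype.ext (by rw [← he1, ← he2]))
  have hbc : b ≠ c := by rintro rfl; exact h23 (Subtype.ext (by rw [← he2, ← he3]))
  have hac : a ≠ c := by rintro rfl; exact h13 (Subtype.ext (by rw [← he1, ← he3]))
  have hva : G.Adj v a := G.mem_edgeSet.1 (he1 ▸ e1.2)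
  have hvb : G.Adj v b := G.mem_edgeSet.1 (he2 ▸ e2.2)
  have hvc : G.Adj v c := G.mem_edgeSet.1 (he3 ▸ e3.2)
  refine ⟨a, b, c, hab, hbc, hac, hva, hvb, hvc, ?_⟩
  have E1 : e1 = GE hva := Subtype.ext (show (e1 : Sym2 W) = s(v, a) from he1.symm)
  have E2 : e2 = GE hvb := Subtype.ext (show (e2 : Sym2 W) = s(v, b) from he2.symm)
  have E3 : e3 = GE hvc := Subtype.ext (show (e3 : Sym2 W) = s(v, c) from he3.symm)
  rw [E1, E2, E3]

/-! ### Maps into the line graph of `X` -/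

variable {V : Type*} (X : SimpleGraph V)

@[simp] lemma symEdgeGraph_adj {d d' : X.Dart} :
    (symEdgeGraph X).Adj d d' ↔
      (d.snd = d'.fst ∧ d.fst ≠ d'.snd) ∨ (d'.snd = d.fst ∧ d'.fst ≠ d.snd) := Iff.rfl

@[simp] lemma kroneckerCover_adj {a b : V × Bool} :
    (kroneckerCover X).Adj a b ↔ X.Adj a.1 b.1 ∧ a.2 ≠ b.2 := Iff.rfl

instance dartFinite [Finite V] : Finite X.Dart :=
  Finite.of_injective _ (SimpleGraph.Dart.toProd_injective)

instance sym2Finite [Finite V] : Finite (Sym2 V) :=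
  Finite.of_surjective (fun p : V × V => s(p.1, p.2))
    (fun z => by induction z with | _ x y => exact ⟨(x, y), rfl⟩)

/-- Map a dart to its underlying edge. -/
def fE : X.Dart → X.edgeSet := fun d => ⟨d.edge, d.edge_mem⟩

@[simp] lemma fE_val (d : X.Dart) : (fE X d : Sym2 V) = s(d.fst, d.snd) := rfl

noncomputable def fD : Finset X.Dart → Finset X.edgeSet := fun t => t.image (fE X)

/-- Project an edge of the Kronecker cover to an edge of `X`. -/
def gE : (kroneckerCover X).edgeSet → X.edgeSet := fun e =>
  ⟨Sym2.map Prod.fst e.1, by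
    obtain ⟨e, he⟩ := e
    induction e with
    | _ p q =>
      rw [Sym2.map_pair_eq]
      exact X.mem_edgeSet.2 ((kroneckerCover_adj X).1 ((kroneckerCover X).mem_edgeSet.1 he)).1⟩

@[simp] lemma gE_val (e : (kroneckerCover X).edgeSet) :
    (gE X e : Sym2 V) = Sym2.map Prod.fst (e : Sym2 (V × Bool)) := rfl

noncomputable def gD : Finset (kroneckerCover X).edgeSet → Finset X.edgeSet :=
  fun u => u.image (gE X)

lemma fE_adj {d d' : X.Dart} (h : (symEdgeGraph X).Adj d d') :
    X.lineGraph.Adj (fE X d) (fE X d') := by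
  have key : ∀ d d' : X.Dart, d.snd = d'.fst → d.fst ≠ d'.snd →
      X.lineGraph.Adj (fE X d) (fE X d') := by
    intro d d' h1 h2
    rw [lineGraph_adj_iff_exists]
    refine ⟨?_, d.snd, ?_, ?_⟩
    · intro hEq
      have hE : (fE X d : Sym2 V) = (fE X d' : Sym2 V) := by rw [hEq]
      rw [fE_val, fE_val, Sym2.eq_iff] at hE
      rcases hE with ⟨ha, hb⟩ | ⟨ha, hb⟩
      · exact d'.adj.ne (h1.symm.trans hb)
      · exact h2 ha
    · rw [fE_val, Sym2.mem_iff]; exact Or.inr rfl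
    · rw [fE_val, Sym2.mem_iff]; exact Or.inl h1
  rcases h with ⟨h1, h2⟩ | ⟨h1, h2⟩
  · exact key d d' h1 h2
  · exact (key d' d h1 h2).symm

lemma bool_eq_of_ne_of_ne : ∀ x y z : Bool, x ≠ z → y ≠ z → x = y := by decide

lemma bool_flip : ∀ x y : Bool, x ≠ y → y = !x := by decide

lemma bool_triple : ∀ x y z : Bool, x ≠ y → y ≠ z → z ≠ x → False := by decide

lemma gE_adj {e e' : (kroneckerCover X).edgeSet}
    (h : (kroneckerCover X).lineGraph.Adj e e') :
    X.lineGraph.Adj (gE X e) (gE X e') := by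
  rw [lineGraph_adj_iff_exists] at h ⊢
  obtain ⟨hne, p, hp1, hp2⟩ := h
  obtain ⟨q, hq⟩ : ∃ q, s(p, q) = (e : Sym2 (V × Bool)) := ⟨_, Sym2.other_spec hp1⟩
  obtain ⟨r, hr⟩ : ∃ r, s(p, r) = (e' : Sym2 (V × Bool)) := ⟨_, Sym2.other_spec hp2⟩
  have hq' := (kroneckerCover_adj X).1 ((kroneckerCover X).mem_edgeSet.1 (hq ▸ e.2))
  have hr' := (kroneckerCover_adj X).1 ((kroneckerCover X).mem_edgeSet.1 (hr ▸ e'.2))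
  have hqr : q ≠ r := fun hE => hne (Subtype.ext (by rw [← hq, ← hr, hE]))
  have hgq : (gE X e : Sym2 V) = s(p.1, q.1) := by rw [gE_val, ← hq, Sym2.map_pair_eq]
  have hgr : (gE X e' : Sym2 V) = s(p.1, r.1) := by rw [gE_val, ← hr, Sym2.map_pair_eq]
  refine ⟨?_, p.1, ?_, ?_⟩
  · intro hEq
    have hv : s(p.1, q.1) = s(p.1, r.1) := by rw [← hgq, ← hgr, hEq]
    rw [Sym2.eq_iff] at hv
    rcases hv with ⟨-, h2⟩ | ⟨h1, h2⟩
    · exact hqr (Prod.ext h2 (bool_eq_of_ne_of_ne q.2 r.2 p.2 (fun hx => hq'.2 hx.symm)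
        (fun hx => hr'.2 hx.symm)))
    · exact X.loopless.irrefl p.1 (h2 ▸ hq'.1)
  · rw [hgq, Sym2.mem_iff]; exact Or.inl rfl
  · rw [hgr, Sym2.mem_iff]; exact Or.inl rfl

/-! ### Directed triangles in the symmetric edge graph -/

variable {a b c : V}

/-- The directed triangle of darts `a → b → c → a`. -/
noncomputable def dtri (h1 : X.Adj a b) (h2 : X.Adj b c) (h3 : X.Adj c a) : Finset X.Dart :=
  {⟨(a, b), h1⟩, ⟨(b, c), h2⟩, ⟨(c, a), h3⟩}

lemma dart_mk_ne {p q : V × V} {hp : X.Adj p.1 p.2} {hq : X.Adj q.1 q.2} (h : p ≠ q) :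
    (⟨p, hp⟩ : X.Dart) ≠ ⟨q, hq⟩ :=
  fun he => h (congrArg SimpleGraph.Dart.toProd he)

lemma dtri_isNClique (h1 : X.Adj a b) (h2 : X.Adj b c) (h3 : X.Adj c a) (hac : a ≠ c) :
    (symEdgeGraph X).IsNClique 3 (dtri X h1 h2 h3) := by
  have n12 : (⟨(a, b), h1⟩ : X.Dart) ≠ ⟨(b, c), h2⟩ :=
    dart_mk_ne X (fun hE => h1.ne (congrArg Prod.fst hE))
  have n13 : (⟨(a, b), h1⟩ : X.Dart) ≠ ⟨(c, a), h3⟩ :=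
    dart_mk_ne X (fun hE => hac (congrArg Prod.fst hE))
  have n23 : (⟨(b, c), h2⟩ : X.Dart) ≠ ⟨(c, a), h3⟩ :=
    dart_mk_ne X (fun hE => h2.ne (congrArg Prod.fst hE))
  have a12 : (symEdgeGraph X).Adj ⟨(a, b), h1⟩ ⟨(b, c), h2⟩ := Or.inl ⟨rfl, hac⟩
  have a23 : (symEdgeGraph X).Adj ⟨(b, c), h2⟩ ⟨(c, a), h3⟩ := Or.inl ⟨rfl, h1.ne'⟩
  have a13 : (symEdgeGraph X).Adj ⟨(a, b), h1⟩ ⟨(c, a), h3⟩ := Or.inr ⟨rfl, h2.ne'⟩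
  constructor
  · intro x hx y hy hxy
    simp only [dtri, Finset.coe_insert, Set.mem_insert_iff, Finset.coe_singleton,
      Set.mem_singleton_iff] at hx hy
    rcases hx with rfl | rfl | rfl <;> rcases hy with rfl | rfl | rfl <;>
      first
        | exact absurd rfl hxy
        | exact a12 | exact a12.symm | exact a23 | exact a23.symm
        | exact a13 | exact a13.symm
  · exact Finset.card_eq_three.2 ⟨_, _, _, n12, n13, n23, rfl⟩

lemma fE_mk (h : X.Adj a b) : fE X ⟨(a, b), h⟩ = GE h := rfl

lemma fD_dtri (h1 : X.Adj a b) (h2 : X.Adj b c) (h3 : X.Adj c a) :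
    fD X (dtri X h1 h2 h3) = {GE h1, GE h2, GE h3} := by
  simp only [fD, dtri, Finset.image_insert, Finset.image_singleton, fE_mk]

lemma gamma_clique_form {t : Finset X.Dart} (ht : (symEdgeGraph X).IsNClique 3 t) :
    ∃ (a b c : V) (h1 : X.Adj a b) (h2 : X.Adj b c) (h3 : X.Adj c a), a ≠ c ∧
      t = dtri X h1 h2 h3 := by
  have key : ∀ d1 d2 d3 : X.Dart, (symEdgeGraph X).Adj d1 d3 → (symEdgeGraph X).Adj d2 d3 →
      d1.snd = d2.fst → d1.fst ≠ d2.snd →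
      ∃ (a b c : V) (h1 : X.Adj a b) (h2 : X.Adj b c) (h3 : X.Adj c a), a ≠ c ∧
        ({d1, d2, d3} : Finset X.Dart) = dtri X h1 h2 h3 := by
    intro d1 d2 d3 a13 a23 e1 e2
    rcases a13 with ⟨f1, f2⟩ | ⟨f1, f2⟩
    · exfalso
      rcases a23 with ⟨g1, g2⟩ | ⟨g1, g2⟩
      · exact d2.adj.ne (e1.symm.trans (f1.trans g1.symm))
      · exact d3.adj.ne (f1.symm.trans (e1.trans g1.symm))
    · rcases a23 with ⟨g1, g2⟩ | ⟨g1, g2⟩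
      · have h2' : X.Adj d1.snd d2.snd := by rw [e1]; exact d2.adj
        have h3' : X.Adj d2.snd d1.fst := by rw [g1, ← f1]; exact d3.adj
        refine ⟨d1.fst, d1.snd, d2.snd, d1.adj, h2', h3', e2, ?_⟩
        have E1 : d1 = (⟨(d1.fst, d1.snd), d1.adj⟩ : X.Dart) := rfl
        have E2 : d2 = (⟨(d1.snd, d2.snd), h2'⟩ : X.Dart) :=
          SimpleGraph.Dart.ext _ _ (Prod.ext e1.symm rfl)
        have E3 : d3 = (⟨(d2.snd, d1.fst), h3'⟩ : X.Dart) :=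
          SimpleGraph.Dart.ext _ _ (Prod.ext g1.symm f1)
        rw [dtri, ← E1, ← E2, ← E3]
      · exact absurd (f1.symm.trans (g1.trans e1.symm)) d1.adj.ne
  obtain ⟨d1, d2, d3, h12, h13, h23, rfl⟩ := Finset.card_eq_three.mp ht.2
  have m1 : d1 ∈ ({d1, d2, d3} : Finset X.Dart) := by simp
  have m2 : d2 ∈ ({d1, d2, d3} : Finset X.Dart) := by simp
  have m3 : d3 ∈ ({d1, d2, d3} : Finset X.Dart) := by simp
  have a13 := ht.1 m1 m3 h13
  have a23 := ht.1 m2 m3 h23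
  rcases ht.1 m1 m2 h12 with ⟨e1, e2⟩ | ⟨e1, e2⟩
  · exact key d1 d2 d3 a13 a23 e1 e2
  · obtain ⟨a, b, c, h1, h2, h3, hac, heq⟩ := key d2 d1 d3 a23 a13 e1 e2
    exact ⟨a, b, c, h1, h2, h3, hac, by rw [Finset.insert_comm]; exact heq⟩

lemma mem_of_fD {t : Finset X.Dart} {x y : V} (hxy : X.Adj x y) (hmem : GE hxy ∈ fD X t) :
    (⟨(x, y), hxy⟩ : X.Dart) ∈ t ∨ (⟨(y, x), hxy.symm⟩ : X.Dart) ∈ t := by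
  rw [fD, Finset.mem_image] at hmem
  obtain ⟨d, hd, hfe⟩ := hmem
  have hE : d.edge = s(x, y) := congrArg Subtype.val hfe
  rw [SimpleGraph.dart_edge_eq_mk'_iff] at hE
  rcases hE with h | h
  · exact Or.inl (SimpleGraph.Dart.ext d ⟨(x, y), hxy⟩ h ▸ hd)
  · exact Or.inr (SimpleGraph.Dart.ext d ⟨(y, x), hxy.symm⟩ h ▸ hd)

lemma dtri_ne_rev (h1 : X.Adj a b) (h2 : X.Adj b c) (h3 : X.Adj c a) (hac : a ≠ c) :
    dtri X h1 h2 h3 ≠ dtri X h3.symm h2.symm h1.symm := by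
  intro hE
  have hm : (⟨(a, b), h1⟩ : X.Dart) ∈ dtri X h3.symm h2.symm h1.symm := by
    rw [← hE]; simp [dtri]
  have hab := h1.ne
  have hbc := h2.ne
  simp only [dtri, Finset.mem_insert, Finset.mem_singleton, SimpleGraph.Dart.ext_iff,
    Prod.ext_iff] at hm
  tauto

lemma gamma_fiber_eq (h1 : X.Adj a b) (h2 : X.Adj b c) (h3 : X.Adj c a) (hac : a ≠ c) :
    {t | t ∈ (symEdgeGraph X).cliqueSet 3 ∧ fD X t = fD X (dtri X h1 h2 h3)} =
      {dtri X h1 h2 h3, dtri X h3.symm h2.symm h1.symm} := by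
  ext t
  simp only [Set.mem_setOf_eq, Set.mem_insert_iff, Set.mem_singleton_iff]
  constructor
  · rintro ⟨htc, hfd⟩
    rw [SimpleGraph.mem_cliqueSet_iff] at htc
    rw [fD_dtri] at hfd
    have H1 : GE h1 ∈ fD X t := by rw [hfd]; simp
    have H2 : GE h2 ∈ fD X t := by rw [hfd]; simp
    have H3 : GE h3 ∈ fD X t := by rw [hfd]; simp
    rcases mem_of_fD X h1 H1 with hab | hba
    · left
      have hbc : (⟨(b, c), h2⟩ : X.Dart) ∈ t := by
        rcases mem_of_fD X h2 H2 with h | h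
        · exact h
        · exfalso
          have hne : (⟨(a, b), h1⟩ : X.Dart) ≠ ⟨(c, b), h2.symm⟩ :=
            dart_mk_ne X (fun hE => hac (congrArg Prod.fst hE))
          rcases htc.1 hab h hne with ⟨q1, -⟩ | ⟨q1, -⟩
          · exact h2.ne q1
          · exact h1.ne q1.symm
      have hca : (⟨(c, a), h3⟩ : X.Dart) ∈ t := by
        rcases mem_of_fD X h3 H3 with h | h
        · exact h
        · exfalso
          have hne : (⟨(a, b), h1⟩ : X.Dart) ≠ ⟨(a, c), h3.symm⟩ :=
            dart_mk_ne X (fun hE => h2.ne (congrArg Prod.snd hE))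
          rcases htc.1 hab h hne with ⟨q1, -⟩ | ⟨q1, -⟩
          · exact h1.ne q1.symm
          · exact hac q1.symm
      have hsub : dtri X h1 h2 h3 ⊆ t := by
        intro d hd
        simp only [dtri, Finset.mem_insert, Finset.mem_singleton] at hd
        rcases hd with rfl | rfl | rfl <;> assumption
      have hcard : (dtri X h1 h2 h3).card = 3 := (dtri_isNClique X h1 h2 h3 hac).2
      exact (Finset.eq_of_subset_of_card_le hsub (by rw [htc.2, hcard])).symm
    · right
      have hcb : (⟨(c, b), h2.symm⟩ : X.Dart) ∈ t := by
        rcases mem_of_fD X h2 H2 with h | h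
        · exfalso
          have hne : (⟨(b, a), h1.symm⟩ : X.Dart) ≠ ⟨(b, c), h2⟩ :=
            dart_mk_ne X (fun hE => hac (congrArg Prod.snd hE))
          rcases htc.1 hba h hne with ⟨q1, -⟩ | ⟨q1, -⟩
          · exact h1.ne q1
          · exact h2.ne q1.symm
        · exact h
      have hac' : (⟨(a, c), h3.symm⟩ : X.Dart) ∈ t := by
        rcases mem_of_fD X h3 H3 with h | h
        · exfalso
          have hne : (⟨(b, a), h1.symm⟩ : X.Dart) ≠ ⟨(c, a), h3⟩ :=
            dart_mk_ne X (fun hE => h2.ne (congrArg Prod.fst hE))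
          rcases htc.1 hba h hne with ⟨q1, -⟩ | ⟨q1, -⟩
          · exact hac q1
          · exact h1.ne q1
        · exact h
      have hsub : dtri X h3.symm h2.symm h1.symm ⊆ t := by
        intro d hd
        simp only [dtri, Finset.mem_insert, Finset.mem_singleton] at hd
        rcases hd with rfl | rfl | rfl <;> assumption
      have hcard : (dtri X h3.symm h2.symm h1.symm).card = 3 :=
        (dtri_isNClique X h3.symm h2.symm h1.symm h1.ne).2
      exact (Finset.eq_of_subset_of_card_le hsub (by rw [htc.2, hcard])).symm
  · have hrev : fD X (dtri X h3.symm h2.symm h1.symm) = fD X (dtri X h1 h2 h3) := by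
      rw [fD_dtri, fD_dtri]
      have E3 : GE h3.symm = GE h3 := Subtype.ext Sym2.eq_swap
      have E2 : GE h2.symm = GE h2 := Subtype.ext Sym2.eq_swap
      have E1 : GE h1.symm = GE h1 := Subtype.ext Sym2.eq_swap
      rw [E1, E2, E3]
      ext e
      simp only [Finset.mem_insert, Finset.mem_singleton]
      tauto
    rintro (rfl | rfl)
    · exact ⟨SimpleGraph.mem_cliqueSet_iff.2 (dtri_isNClique X h1 h2 h3 hac), rfl⟩
    · exact ⟨SimpleGraph.mem_cliqueSet_iff.2 (dtri_isNClique X h3.symm h2.symm h1.symm h1.ne),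
        hrev⟩

/-! ### Stars in the Kronecker cover -/

/-- The lifted edge `{(v,i), (a,!i)}` of the Kronecker cover. -/
def KE (i : Bool) {v a : V} (h : X.Adj v a) : (kroneckerCover X).edgeSet :=
  ⟨s((v, i), (a, !i)), (kroneckerCover X).mem_edgeSet.2
    ((kroneckerCover_adj X).2 ⟨h, by simp⟩)⟩

@[simp] lemma KE_val (i : Bool) {v a : V} (h : X.Adj v a) :
    (KE X i h : Sym2 (V × Bool)) = s((v, i), (a, !i)) := rfl

/-- The lifted star at `(v, i)` in the Kronecker cover. -/
noncomputable def kstar (i : Bool) {v a b c : V} (h1 : X.Adj v a) (h2 : X.Adj v b)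
    (h3 : X.Adj v c) : Finset (kroneckerCover X).edgeSet :=
  {KE X i h1, KE X i h2, KE X i h3}

lemma KE_ne (i : Bool) {v a b : V} (hab : a ≠ b) (h1 : X.Adj v a) (h2 : X.Adj v b) :
    KE X i h1 ≠ KE X i h2 := by
  intro hE
  have hv := congrArg Subtype.val hE
  rw [KE_val, KE_val, Sym2.eq_iff] at hv
  rcases hv with ⟨-, h⟩ | ⟨h, -⟩
  · exact hab (congrArg Prod.fst h)
  · have := congrArg Prod.snd h
    simp at this

lemma kstar_isNClique (i : Bool) {v a b c : V} (hab : a ≠ b) (hbc : b ≠ c) (hac : a ≠ c)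
    (h1 : X.Adj v a) (h2 : X.Adj v b) (h3 : X.Adj v c) :
    (kroneckerCover X).lineGraph.IsNClique 3 (kstar X i h1 h2 h3) := by
  have KAdj : ∀ {x y : V} (hx : X.Adj v x) (hy : X.Adj v y), x ≠ y →
      (kroneckerCover X).lineGraph.Adj (KE X i hx) (KE X i hy) := by
    intro x y hx hy hxy
    rw [lineGraph_adj_iff_exists]
    exact ⟨KE_ne X i hxy hx hy, (v, i), by rw [KE_val, Sym2.mem_iff]; exact Or.inl rfl,
      by rw [KE_val, Sym2.mem_iff]; exact Or.inl rfl⟩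
  constructor
  · intro x hx y hy hxy
    simp only [kstar, Finset.coe_insert, Set.mem_insert_iff, Finset.coe_singleton,
      Set.mem_singleton_iff] at hx hy
    rcases hx with rfl | rfl | rfl <;> rcases hy with rfl | rfl | rfl <;>
      first
        | exact absurd rfl hxy
        | exact KAdj h1 h2 hab | exact (KAdj h1 h2 hab).symm
        | exact KAdj h2 h3 hbc | exact (KAdj h2 h3 hbc).symm
        | exact KAdj h1 h3 hac | exact (KAdj h1 h3 hac).symm
  · exact Finset.card_eq_three.2 ⟨_, _, _, KE_ne X i hab h1 h2, KE_ne X i hac h1 h3,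
      KE_ne X i hbc h2 h3, rfl⟩

lemma gE_KE (i : Bool) {v a : V} (h : X.Adj v a) : gE X (KE X i h) = GE h :=
  Subtype.ext (by rw [gE_val, KE_val, Sym2.map_pair_eq]; rfl)

lemma gD_kstar (i : Bool) {v a b c : V} (h1 : X.Adj v a) (h2 : X.Adj v b) (h3 : X.Adj v c) :
    gD X (kstar X i h1 h2 h3) = {GE h1, GE h2, GE h3} := by
  simp only [gD, kstar, Finset.image_insert, Finset.image_singleton, gE_KE]

lemma kron_clique_form {u : Finset (kroneckerCover X).edgeSet}
    (hu : (kroneckerCover X).lineGraph.IsNClique 3 u) :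
    ∃ (v : V) (i : Bool) (a b c : V), a ≠ b ∧ b ≠ c ∧ a ≠ c ∧
      ∃ (h1 : X.Adj v a) (h2 : X.Adj v b) (h3 : X.Adj v c), u = kstar X i h1 h2 h3 := by
  rcases triangle_classify hu with ⟨p, hp⟩ | ⟨x, y, z, k1, k2, k3, -⟩
  · obtain ⟨q1, q2, q3, hq12, hq23, hq13, k1, k2, k3, rfl⟩ := star_form hu hp
    have a1 := ((kroneckerCover_adj X).1 k1).1
    have a2 := ((kroneckerCover_adj X).1 k2).1
    have a3 := ((kroneckerCover_adj X).1 k3).1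
    have b1 : q1.2 = !p.2 := bool_flip p.2 q1.2 ((kroneckerCover_adj X).1 k1).2
    have b2 : q2.2 = !p.2 := bool_flip p.2 q2.2 ((kroneckerCover_adj X).1 k2).2
    have b3 : q3.2 = !p.2 := bool_flip p.2 q3.2 ((kroneckerCover_adj X).1 k3).2
    refine ⟨p.1, p.2, q1.1, q2.1, q3.1, ?_, ?_, ?_, a1, a2, a3, ?_⟩
    · exact fun h => hq12 (Prod.ext h (b1.trans b2.symm))
    · exact fun h => hq23 (Prod.ext h (b2.trans b3.symm))
    · exact fun h => hq13 (Prod.ext h (b1.trans b3.symm))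
    · have E1 : GE k1 = KE X p.2 a1 := Subtype.ext (by rw [GE_val, KE_val, ← b1])
      have E2 : GE k2 = KE X p.2 a2 := Subtype.ext (by rw [GE_val, KE_val, ← b2])
      have E3 : GE k3 = KE X p.2 a3 := Subtype.ext (by rw [GE_val, KE_val, ← b3])
      rw [E1, E2, E3]; ext e; simp [kstar]
  · exact (bool_triple x.2 y.2 z.2 ((kroneckerCover_adj X).1 k1).2
      ((kroneckerCover_adj X).1 k2).2 (((kroneckerCover_adj X).1 k3).2)).elim

lemma sym2_left_cancel {v x y : V} (hvy : v ≠ y) (hE : s(v, x) = s(v, y)) : x = y := by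
  rw [Sym2.eq_iff] at hE
  rcases hE with ⟨-, h⟩ | ⟨h1, -⟩
  · exact h
  · exact absurd h1 hvy

lemma kstar_ne {v a b c : V} (h1 : X.Adj v a) (h2 : X.Adj v b) (h3 : X.Adj v c) :
    kstar X false h1 h2 h3 ≠ kstar X true h1 h2 h3 := by
  intro hE
  have hm : KE X false h1 ∈ kstar X true h1 h2 h3 := by rw [← hE]; simp [kstar]
  have hva := h1.ne
  have hvb := h2.ne
  have hvc := h3.ne
  simp only [kstar, Finset.mem_insert, Finset.mem_singleton, Subtype.ext_iff, KE_val,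
    Sym2.eq_iff, Prod.ext_iff, Bool.not_true, Bool.not_false] at hm
  tauto

lemma kron_fiber_eq (i : Bool) {v a b c : V} (hab : a ≠ b) (hbc : b ≠ c) (hac : a ≠ c)
    (h1 : X.Adj v a) (h2 : X.Adj v b) (h3 : X.Adj v c) :
    {u | u ∈ (kroneckerCover X).lineGraph.cliqueSet 3 ∧
        gD X u = gD X (kstar X i h1 h2 h3)} =
      {kstar X false h1 h2 h3, kstar X true h1 h2 h3} := by
  ext u
  simp only [Set.mem_setOf_eq, Set.mem_insert_iff, Set.mem_singleton_iff]
  constructor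
  · rintro ⟨huc, hgd⟩
    rw [SimpleGraph.mem_cliqueSet_iff] at huc
    obtain ⟨w, j, x, y, z, dxy, dyz, dxz, k1, k2, k3, rfl⟩ := kron_clique_form X huc
    rw [gD_kstar, gD_kstar] at hgd
    have m1 : GE k1 ∈ ({GE h1, GE h2, GE h3} : Finset X.edgeSet) := by rw [← hgd]; simp [kstar]
    have m2 : GE k2 ∈ ({GE h1, GE h2, GE h3} : Finset X.edgeSet) := by rw [← hgd]; simp [kstar]
    have m3 : GE k3 ∈ ({GE h1, GE h2, GE h3} : Finset X.edgeSet) := by rw [← hgd]; simp [kstar]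
    have e1 : s(w, x) = s(v, a) ∨ s(w, x) = s(v, b) ∨ s(w, x) = s(v, c) := by
      simpa only [Finset.mem_insert, Finset.mem_singleton, Subtype.ext_iff, GE_val] using m1
    have e2 : s(w, y) = s(v, a) ∨ s(w, y) = s(v, b) ∨ s(w, y) = s(v, c) := by
      simpa only [Finset.mem_insert, Finset.mem_singleton, Subtype.ext_iff, GE_val] using m2
    have hwv : w = v := by
      by_contra hwv
      have p1 : x = v := by
        rcases e1 with h | h | h <;>
          · rcases Sym2.eq_iff.1 h with ⟨h', -⟩ | ⟨-, h'⟩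
            · exact absurd h' hwv
            · exact h'
      have p2 : y = v := by
        rcases e2 with h | h | h <;>
          · rcases Sym2.eq_iff.1 h with ⟨h', -⟩ | ⟨-, h'⟩
            · exact absurd h' hwv
            · exact h'
      exact dxy (p1.trans p2.symm)
    subst hwv
    have step : ∀ {m : V} (km : X.Adj w m),
        GE km ∈ ({GE h1, GE h2, GE h3} : Finset X.edgeSet) →
        KE X j km ∈ kstar X j h1 h2 h3 := by
      intro m km hm
      simp only [Finset.mem_insert, Finset.mem_singleton, Subtype.ext_iff, GE_val] at hm
      simp only [kstar, Finset.mem_insert, Finset.mem_singleton]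
      rcases hm with h | h | h
      · exact Or.inl (Subtype.ext
          (by rw [KE_val, KE_val, sym2_left_cancel h1.ne h]))
      · exact Or.inr (Or.inl (Subtype.ext
          (by rw [KE_val, KE_val, sym2_left_cancel h2.ne h])))
      · exact Or.inr (Or.inr (Subtype.ext
          (by rw [KE_val, KE_val, sym2_left_cancel h3.ne h])))
    have hsub : kstar X j k1 k2 k3 ⊆ kstar X j h1 h2 h3 := by
      intro e he
      simp only [kstar, Finset.mem_insert, Finset.mem_singleton] at he
      rcases he with rfl | rfl | rfl
      · exact step k1 m1
      · exact step k2 m2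
      · exact step k3 m3
    have hEq : kstar X j k1 k2 k3 = kstar X j h1 h2 h3 :=
      Finset.eq_of_subset_of_card_le hsub (le_of_eq
        ((kstar_isNClique X j hab hbc hac h1 h2 h3).2.trans
          (kstar_isNClique X j dxy dyz dxz k1 k2 k3).2.symm))
    cases j
    · exact Or.inl hEq
    · exact Or.inr hEq
  · rintro (rfl | rfl)
    · exact ⟨SimpleGraph.mem_cliqueSet_iff.2 (kstar_isNClique X false hab hbc hac h1 h2 h3),
        by rw [gD_kstar, gD_kstar]⟩
    · exact ⟨SimpleGraph.mem_cliqueSet_iff.2 (kstar_isNClique X true hab hbc hac h1 h2 h3),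
        by rw [gD_kstar, gD_kstar]⟩

/-! ### Coverage and disjointness -/

lemma fD_isNClique {t : Finset X.Dart} (ht : (symEdgeGraph X).IsNClique 3 t) :
    X.lineGraph.IsNClique 3 (fD X t) := by
  have h' := isNClique_image (fun d d' h => fE_adj X h) ht
  convert h' using 2
  ext e
  simp [fD]

lemma gD_isNClique {u : Finset (kroneckerCover X).edgeSet}
    (hu : (kroneckerCover X).lineGraph.IsNClique 3 u) :
    X.lineGraph.IsNClique 3 (gD X u) := by
  have h' := isNClique_image (fun e e' h => gE_adj X h) hu
  convert h' using 2
  ext e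
  simp [gD]

lemma cover {s : Finset X.edgeSet} (hs : s ∈ X.lineGraph.cliqueSet 3) :
    s ∈ gD X '' ((kroneckerCover X).lineGraph.cliqueSet 3) ∨
      s ∈ fD X '' ((symEdgeGraph X).cliqueSet 3) := by
  have hs' := SimpleGraph.mem_cliqueSet_iff.1 hs
  rcases triangle_classify hs' with ⟨v, hv⟩ | ⟨x, y, z, h1, h2, h3, rfl⟩
  · obtain ⟨a, b, c, hab, hbc, hac, h1, h2, h3, rfl⟩ := star_form hs' hv
    exact Or.inl ⟨kstar X false h1 h2 h3,
      SimpleGraph.mem_cliqueSet_iff.2 (kstar_isNClique X false hab hbc hac h1 h2 h3),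
      gD_kstar X false h1 h2 h3⟩
  · exact Or.inr ⟨dtri X h1 h2 h3,
      SimpleGraph.mem_cliqueSet_iff.2 (dtri_isNClique X h1 h2 h3 h3.ne'),
      fD_dtri X h1 h2 h3⟩

lemma disj : Disjoint (gD X '' ((kroneckerCover X).lineGraph.cliqueSet 3))
    (fD X '' ((symEdgeGraph X).cliqueSet 3)) := by
  rw [Set.disjoint_left]
  rintro s ⟨u, hu, rfl⟩ ⟨t, ht, hts⟩
  obtain ⟨w, j, a, b, c, hab, hbc, hac, h1, h2, h3, rfl⟩ :=
    kron_clique_form X (SimpleGraph.mem_cliqueSet_iff.1 hu)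
  obtain ⟨x, y, z, k1, k2, k3, hxz, rfl⟩ :=
    gamma_clique_form X (SimpleGraph.mem_cliqueSet_iff.1 ht)
  rw [fD_dtri, gD_kstar] at hts
  have getW : ∀ {p q : V} (hk : X.Adj p q),
      GE hk ∈ ({GE h1, GE h2, GE h3} : Finset X.edgeSet) → w ∈ s(p, q) := by
    intro p q hk hm
    simp only [Finset.mem_insert, Finset.mem_singleton, Subtype.ext_iff, GE_val] at hm
    rcases hm with h | h | h <;> (rw [h, Sym2.mem_iff]; exact Or.inl rfl)
  have w1 := getW k1 (by rw [← hts]; simp)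
  have w2 := getW k2 (by rw [← hts]; simp)
  have w3 := getW k3 (by rw [← hts]; simp)
  rw [Sym2.mem_iff] at w1 w2 w3
  rcases w1 with rfl | rfl
  · rcases w2 with h | h
    · exact k1.ne h
    · exact hxz h
  · rcases w3 with h | h
    · exact k2.ne h
    · exact k1.ne h.symm

end TwoTri

open TwoTri in
/-- For a finite connected simple graph `X`: `2t' = t₂ + t₃`, where `t'`, `t₂`, `t₃` are the
numbers of triangles in `L(X)`, `γ(X)` and `L(X'')` respectively. -/
theorem two_triangles_lineGraph {V : Type*} [Fintype V]
    (X : SimpleGraph V) (hconn : X.Connected) :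
    2 * (X.lineGraph.cliqueSet 3).ncard =
      ((symEdgeGraph X).cliqueSet 3).ncard +
        ((kroneckerCover X).lineGraph.cliqueSet 3).ncard := by
  classical
  have c1 : ((symEdgeGraph X).cliqueSet 3).ncard =
      2 * (fD X '' ((symEdgeGraph X).cliqueSet 3)).ncard := by
    refine two_mul_of_fibers (fD X) _ (fun s hs => ?_)
    obtain ⟨t0, ht0, rfl⟩ := hs
    obtain ⟨a, b, c, h1, h2, h3, hac, rfl⟩ :=
      gamma_clique_form X (SimpleGraph.mem_cliqueSet_iff.1 ht0)
    rw [gamma_fiber_eq X h1 h2 h3 hac]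
    exact Set.ncard_pair (dtri_ne_rev X h1 h2 h3 hac)
  have c2 : ((kroneckerCover X).lineGraph.cliqueSet 3).ncard =
      2 * (gD X '' ((kroneckerCover X).lineGraph.cliqueSet 3)).ncard := by
    refine two_mul_of_fibers (gD X) _ (fun s hs => ?_)
    obtain ⟨u0, hu0, rfl⟩ := hs
    obtain ⟨w, j, a, b, c, hab, hbc, hac, h1, h2, h3, rfl⟩ :=
      kron_clique_form X (SimpleGraph.mem_cliqueSet_iff.1 hu0)
    rw [kron_fiber_eq X j hab hbc hac h1 h2 h3]
    exact Set.ncard_pair (kstar_ne X h1 h2 h3)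
  have c3 : X.lineGraph.cliqueSet 3 =
      (gD X '' ((kroneckerCover X).lineGraph.cliqueSet 3)) ∪
        (fD X '' ((symEdgeGraph X).cliqueSet 3)) := by
    apply Set.Subset.antisymm
    · intro s hs
      exact cover X hs
    · rintro s (⟨u, hu, rfl⟩ | ⟨t, ht, rfl⟩)
      · exact SimpleGraph.mem_cliqueSet_iff.2
          (gD_isNClique X (SimpleGraph.mem_cliqueSet_iff.1 hu))
      · exact SimpleGraph.mem_cliqueSet_iff.2
          (fD_isNClique X (SimpleGraph.mem_cliqueSet_iff.1 ht))
  have c5 : (X.lineGraph.cliqueSet 3).ncard =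
      (gD X '' ((kroneckerCover X).lineGraph.cliqueSet 3)).ncard +
        (fD X '' ((symEdgeGraph X).cliqueSet 3)).ncard := by
    rw [c3]
    exact Set.ncard_union_eq (disj X) (Set.toFinite _) (Set.toFinite _)
  rw [c5, c1, c2]
  ring
end
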